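/- arXiv:0804.2596 — 9 statements merged into one kernel-verified Lean document; each statement's English description precedes it below -/
import Mathlib

section
/- Let q ≥ 1 and let w₁,…,w_q be non-negative integers with Σ_{i=1}^q w_i ≥ 1. For every C^∞ function f : ℝ^q → ℝ there exists a C^∞ function g : ℝ^q → ℝ such that Σ_{i=1}^q w_i·x_i·(∂g/∂x_i)(x) + (Σ_{i=1}^q w_i)·g(x) = f(x) for all x ∈ ℝ^q. Equivalently, f = div(g·E_w), where E_w(x) = (w₁x₁,…,w_qx_q) is the generalized Euler vector field and div Y = Σ_{i=1}^q ∂Y_i/∂x_i; i.e. every q-form f·dx₁∧…∧dx_q equals d(g·E_w ⌟ dx₁∧…∧dx_q). -/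
/-!
The solution is the weighted average `g x = ∫₀¹ t ^ (W - 1) f (δ_t x) dt`, `W = ∑ wᵢ`, along the
weighted dilations `δ_t x = (t ^ wᵢ xᵢ)ᵢ`, whose velocity at `t = 1` is `E_w`. The substitution
`u = s t` gives `s ^ W g (δ_s x) = ∫₀ˢ u ^ (W - 1) f (δ_u x) du`; differentiating both sides at
`s = 1` yields `E_w g + W g = f`. Smoothness of `g` is differentiation under the integral sign.
-/

open Metric Set MeasureTheory

section ParametricIntegral

variable {X E : Type*} [NormedAddCommGroup X] [NormedSpace ℝ X]
  [NormedAddCommGroup E] [NormedSpace ℝ E]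

theorem hasFDerivAt_parametric_intervalIntegral [ProperSpace X] {F : ℝ × X → E}
    (hF : ContDiff ℝ 1 F) (a b : ℝ) (x₀ : X) :
    HasFDerivAt (fun x => ∫ t in a..b, F (t, x))
      (∫ t in a..b, (fderiv ℝ F (t, x₀)).comp (.inr ℝ ℝ X)) x₀ := by
  set F' : ℝ × X → X →L[ℝ] E := fun p => (fderiv ℝ F p).comp (.inr ℝ ℝ X)
  have hF' : Continuous F' := (hF.continuous_fderiv one_ne_zero).clm_comp continuous_const
  obtain ⟨C, hC⟩ := (isCompact_uIcc.prod (isCompact_closedBall x₀ 1)).exists_bound_of_continuousOn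
    hF'.continuousOn
  have hslice : ∀ x : X, Continuous fun t : ℝ => F (t, x) := fun x =>
    hF.continuous.comp (Continuous.prodMk_left x)
  apply intervalIntegral.hasFDerivAt_integral_of_dominated_of_fderiv_le
    (F := fun x t => F (t, x)) (F' := fun x t => F' (t, x)) (bound := fun _ => C)
    (ball_mem_nhds x₀ one_pos)
  · exact .of_forall fun x => (hslice x).aestronglyMeasurable
  · exact (hslice x₀).intervalIntegrable a b
  · exact (hF'.comp (Continuous.prodMk_left x₀)).aestronglyMeasurable
  · exact .of_forall fun t ht x hx =>
      hC (t, x) ⟨uIoc_subset_uIcc ht, ball_subset_closedBall hx⟩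
  · exact intervalIntegrable_const
  · exact .of_forall fun t _ x _ =>
      ((hF.differentiable one_ne_zero (t, x)).hasFDerivAt).comp x (hasFDerivAt_prodMk_right t x)

theorem contDiff_parametric_intervalIntegral [FiniteDimensional ℝ X] {n : ℕ} {F : ℝ × X → E}
    (hF : ContDiff ℝ n F) (a b : ℝ) : ContDiff ℝ n fun x => ∫ t in a..b, F (t, x) := by
  induction n generalizing F with
  | zero =>
    exact contDiff_zero.2 <| intervalIntegral.continuous_parametric_intervalIntegral_of_continuous'
      (f := fun x t => F (t, x)) (hF.continuous.comp continuous_swap) a b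
  | succ n ih =>
    have hF₁ : ContDiff ℝ 1 F := hF.of_le (by exact_mod_cast Nat.le_add_left 1 n)
    have hderiv := hasFDerivAt_parametric_intervalIntegral hF₁ a b
    -- Derivatives in a fixed direction keep the codomain `E`, so the induction stays in one type.
    rw [Nat.cast_succ, contDiff_succ_iff_fderiv_apply]
    refine ⟨fun x => (hderiv x).differentiableAt, by simp, fun v => ?_⟩
    have hint : ∀ x : X,
        IntervalIntegrable (fun t => (fderiv ℝ F (t, x)).comp (.inr ℝ ℝ X)) volume a b :=
      fun x => ((hF₁.continuous_fderiv one_ne_zero).clm_comp continuous_const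
        |>.comp (Continuous.prodMk_left x)).intervalIntegrable a b
    simp_rw [(hderiv _).fderiv, ContinuousLinearMap.intervalIntegral_apply (hint _)]
    exact ih ((hF.fderiv_right le_rfl).clm_apply contDiff_const)

end ParametricIntegral

section WeightedDilation

variable {ι : Type*} (w : ι → ℕ)

def weightedDilation (t : ℝ) (x : ι → ℝ) : ι → ℝ := fun i => t ^ w i * x i

def eulerField (x : ι → ℝ) : ι → ℝ := fun i => w i * x i

@[simp]
theorem weightedDilation_one (x : ι → ℝ) : weightedDilation w 1 x = x := by
  ext i; simp [weightedDilation]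

theorem weightedDilation_mul (s t : ℝ) (x : ι → ℝ) :
    weightedDilation w (s * t) x = weightedDilation w t (weightedDilation w s x) := by
  ext i; simp only [weightedDilation, mul_pow]; ring

theorem hasDerivAt_weightedDilation_one (x : ι → ℝ) :
    HasDerivAt (fun s => weightedDilation w s x) (eulerField w x) 1 :=
  hasDerivAt_pi.2 fun i => by
    simpa [weightedDilation, eulerField] using (hasDerivAt_pow (w i) (1 : ℝ)).mul_const (x i)

theorem contDiff_weightedDilation [Fintype ι] {n : WithTop ℕ∞} :
    ContDiff ℝ n fun p : ℝ × (ι → ℝ) => weightedDilation w p.1 p.2 :=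
  contDiff_pi.2 fun i => (contDiff_fst.pow _).mul (contDiff_pi.1 contDiff_snd i)

end WeightedDilation

section EulerPrimitive

variable {ι : Type*} (w : ι → ℕ) (k : ℕ) (f : (ι → ℝ) → ℝ)

/-- The solution for total weight `k + 1`; writing the weight as `k + 1` keeps the exponent free of
natural subtraction. -/
noncomputable def eulerPrimitive (x : ι → ℝ) : ℝ :=
  ∫ t in (0 : ℝ)..1, t ^ k * f (weightedDilation w t x)

theorem contDiff_eulerPrimitive [Fintype ι] {n : ℕ} (hf : ContDiff ℝ n f) :
    ContDiff ℝ n (eulerPrimitive w k f) :=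
  contDiff_parametric_intervalIntegral
    ((contDiff_fst.pow k).mul (hf.comp (contDiff_weightedDilation w))) 0 1

theorem pow_mul_eulerPrimitive_weightedDilation {s : ℝ} (hs : s ≠ 0) (x : ι → ℝ) :
    s ^ (k + 1) * eulerPrimitive w k f (weightedDilation w s x) =
      ∫ u in (0 : ℝ)..s, u ^ k * f (weightedDilation w u x) := by
  have hsubst := intervalIntegral.integral_comp_mul_left
    (fun u => u ^ k * f (weightedDilation w u x)) (a := 0) (b := 1) hs
  simp only [mul_zero, mul_one, smul_eq_mul, weightedDilation_mul, mul_pow, mul_assoc,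
    intervalIntegral.integral_const_mul] at hsubst
  rw [eulerPrimitive, pow_succ', mul_assoc, hsubst, ← mul_assoc, mul_inv_cancel₀ hs, one_mul]

theorem fderiv_eulerPrimitive_eulerField_add [Fintype ι] (hf : ContDiff ℝ 1 f) (x : ι → ℝ) :
    fderiv ℝ (eulerPrimitive w k f) x (eulerField w x) + (k + 1) * eulerPrimitive w k f x =
      f x := by
  set g := eulerPrimitive w k f
  set ψ : ℝ → ℝ := fun u => u ^ k * f (weightedDilation w u x)
  have hg : HasFDerivAt g (fderiv ℝ g x) (weightedDilation w 1 x) := by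
    rw [weightedDilation_one]
    exact ((contDiff_eulerPrimitive w k f hf).differentiable one_ne_zero x).hasFDerivAt
  have hprod : HasDerivAt (fun s => s ^ (k + 1) * g (weightedDilation w s x))
      ((k + 1) * g x + fderiv ℝ g x (eulerField w x)) 1 := by
    simpa using (hasDerivAt_pow (k + 1) (1 : ℝ)).fun_mul
      (hg.comp_hasDerivAt 1 (hasDerivAt_weightedDilation_one w x))
  have hψ : Continuous ψ :=
    (continuous_pow k).mul (hf.continuous.comp (by unfold weightedDilation; fun_prop))
  have hprimitive : HasDerivAt (fun s => ∫ u in (0 : ℝ)..s, ψ u) (ψ 1) 1 :=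
    (hψ.integral_hasStrictDerivAt 0 1).hasDerivAt
  have heq : (fun s => s ^ (k + 1) * g (weightedDilation w s x)) =ᶠ[nhds 1]
      fun s => ∫ u in (0 : ℝ)..s, ψ u := by
    filter_upwards [eventually_ne_nhds one_ne_zero] with s hs
    exact pow_mul_eulerPrimitive_weightedDilation w k f hs x
  have := hprod.unique (hprimitive.congr_of_eventuallyEq heq)
  simp only [ψ, one_pow, one_mul, weightedDilation_one] at this
  linarith

end EulerPrimitive

theorem ContinuousLinearMap.apply_eq_sum_mul_apply_single {ι : Type*} [Fintype ι] [DecidableEq ι]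
    (L : (ι → ℝ) →L[ℝ] ℝ) (v : ι → ℝ) : L v = ∑ i, v i * L (Pi.single i 1) := by
  conv_lhs => rw [← Finset.univ_sum_single v]
  rw [map_sum]
  refine Finset.sum_congr rfl fun i _ => ?_
  rw [← smul_eq_mul, ← L.map_smul, ← Pi.single_smul, smul_eq_mul, mul_one]

open Finset in
theorem euler_divergence_solvable_general
    (q : ℕ) (w : Fin q → ℕ) (hw : 1 ≤ ∑ i, w i)
    (f : (Fin q → ℝ) → ℝ) (hf : ContDiff ℝ (⊤ : ℕ∞) f) :
    ∃ g : (Fin q → ℝ) → ℝ, ContDiff ℝ (⊤ : ℕ∞) g ∧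
      ∀ x : Fin q → ℝ,
        (∑ i, (w i : ℝ) * x i * fderiv ℝ g x (Pi.single i 1)) +
          (∑ i, (w i : ℝ)) * g x = f x := by
  obtain ⟨k, hk⟩ : ∃ k, ∑ i, w i = k + 1 := Nat.exists_eq_add_of_le' hw
  refine ⟨eulerPrimitive w k f,
    contDiff_infty.2 fun n => contDiff_eulerPrimitive w k f (contDiff_infty.1 hf n), fun x => ?_⟩
  have hW : (∑ i, (w i : ℝ)) = k + 1 := by exact_mod_cast hk
  rw [hW, ← fderiv_eulerPrimitive_eulerField_add w k f (contDiff_infty.1 hf 1) x,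
    ContinuousLinearMap.apply_eq_sum_mul_apply_single _ (eulerField w x)]
  rfl

open Finset in
/-- Analytic core of Proposition 2.10 (prEuler): for non-negative integer weights `w` with
positive total weight, the equation `div (g • E_w) = f`, i.e.
`∑ i, wᵢ xᵢ ∂g/∂xᵢ + (∑ i, wᵢ) g = f`, has a smooth solution `g` for every smooth `f`. -/
theorem euler_divergence_solvable
    (q : ℕ) (hq : 1 ≤ q) (w : Fin q → ℕ) (hw : 1 ≤ ∑ i, w i)
    (f : (Fin q → ℝ) → ℝ) (hf : ContDiff ℝ (⊤ : ℕ∞) f) :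
    ∃ g : (Fin q → ℝ) → ℝ, ContDiff ℝ (⊤ : ℕ∞) g ∧
      ∀ x : Fin q → ℝ,
        (∑ i, (w i : ℝ) * x i * fderiv ℝ g x (Pi.single i 1)) +
          (∑ i, (w i : ℝ)) * g x = f x :=
  euler_divergence_solvable_general q w hw f hf
end

section
/- Let q ≥ 1 and let w₁,…,w_q be non-negative integers with Σ_{i=1}^q w_i ≥ 1. Set α := (Σ_{i=1}^q w_i) − 1 ∈ ℕ and, for s ∈ [0,1], F_s(x) := (s^{w₁}x₁,…,s^{w_q}x_q). Then for every C^∞ function f : ℝ^q → ℝ the function g(x) := ∫₀¹ s^α · f(F_s(x)) ds is C^∞ on ℝ^q and satisfies Σ_{i=1}^q w_i·x_i·(∂g/∂x_i)(x) + (Σ_{i=1}^q w_i)·g(x) = f(x) for all x ∈ ℝ^q. -/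
/-!
Write `F_t x = (t^{w₁} x₁, …, t^{w_q} x_q)`, `W = ∑ wᵢ = α + 1` and `k u = u^α f(F_u x)`.
Since `F_s ∘ F_t = F_{ts}`, the substitution `u = t s` gives `t^W g(F_t x) = ∫₀ᵗ k` for every
real `t` (at `t = 0` both sides vanish because `W ≥ 1`). Differentiating at `t = 1`: the left side
gives `W g(x) + ∑ wᵢ xᵢ ∂ᵢg(x)`, since `d/dt F_t x = (wᵢ xᵢ)ᵢ` at `t = 1`, and the right side gives
`k 1 = f x`. Smoothness of `g` is differentiation under the integral sign, iterated.
-/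

open intervalIntegral Metric

section ParametricIntegral

universe u

variable {H : Type u} [NormedAddCommGroup H] [NormedSpace ℝ H] [ProperSpace H]
  {F : Type u} [NormedAddCommGroup F] [NormedSpace ℝ F]

theorem hasFDerivAt_intervalIntegral_of_contDiff {Φ : H × ℝ → F} (hΦ : ContDiff ℝ 1 Φ)
    (a b : ℝ) (x₀ : H) :
    HasFDerivAt (fun x => ∫ s in a..b, Φ (x, s))
      (∫ s in a..b, (fderiv ℝ Φ (x₀, s)).comp (ContinuousLinearMap.inl ℝ H ℝ)) x₀ := by
  have hΦ' : Continuous fun p : H × ℝ => (fderiv ℝ Φ p).comp (ContinuousLinearMap.inl ℝ H ℝ) :=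
    ((ContinuousLinearMap.compL ℝ H (H × ℝ) F).flip (ContinuousLinearMap.inl ℝ H ℝ)).continuous.comp
      (hΦ.continuous_fderiv one_ne_zero)
  obtain ⟨C, hC⟩ := ((isCompact_closedBall x₀ 1).prod (isCompact_uIcc (a := a) (b := b))
    ).exists_bound_of_continuousOn hΦ'.continuousOn
  exact hasFDerivAt_integral_of_dominated_of_fderiv_le (F := fun x t => Φ (x, t))
    (bound := fun _ => C) (ball_mem_nhds x₀ one_pos)
    (.of_forall fun x => (hΦ.continuous.comp (.prodMk_right x)).aestronglyMeasurable)
    ((hΦ.continuous.comp (.prodMk_right x₀)).intervalIntegrable a b)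
    ((hΦ'.comp (.prodMk_right x₀)).aestronglyMeasurable)
    (.of_forall fun t ht x hx =>
      hC (x, t) ⟨ball_subset_closedBall hx, Set.uIoc_subset_uIcc ht⟩)
    intervalIntegrable_const
    (.of_forall fun t _ x _ =>
      ((hΦ.differentiable one_ne_zero (x, t)).hasFDerivAt.comp x (hasFDerivAt_prodMk_left x t)))

theorem contDiff_intervalIntegral_of_contDiff {n : ℕ} {Φ : H × ℝ → F} (hΦ : ContDiff ℝ n Φ)
    (a b : ℝ) : ContDiff ℝ n (fun x => ∫ s in a..b, Φ (x, s)) := by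
  induction n generalizing F with
  | zero =>
    exact contDiff_zero.2 <| continuous_parametric_intervalIntegral_of_continuous'
      (f := fun x s => Φ (x, s)) hΦ.continuous a b
  | succ n ih =>
    have hΦ1 : ContDiff ℝ 1 Φ := hΦ.of_le (mod_cast n.succ_pos)
    have hderiv := hasFDerivAt_intervalIntegral_of_contDiff hΦ1 a b
    rw [Nat.cast_succ, contDiff_succ_iff_fderiv]
    refine ⟨fun x => (hderiv x).differentiableAt, by simp, ?_⟩
    rw [funext fun x => (hderiv x).fderiv]
    exact ih ((((ContinuousLinearMap.compL ℝ H (H × ℝ) F).flip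
      (ContinuousLinearMap.inl ℝ H ℝ)).contDiff).comp (hΦ.fderiv_right le_rfl))

end ParametricIntegral

section WeightedScaling

variable {ι : Type*}

def weightedScaling (w : ι → ℕ) (t : ℝ) (x : ι → ℝ) : ι → ℝ :=
  fun i => t ^ w i * x i

@[fun_prop]
theorem continuous_weightedScaling_left (w : ι → ℕ) (x : ι → ℝ) :
    Continuous fun t => weightedScaling w t x :=
  continuous_pi fun i => (continuous_pow (w i)).mul continuous_const

theorem weightedScaling_weightedScaling (w : ι → ℕ) (s t : ℝ) (x : ι → ℝ) :
    weightedScaling w s (weightedScaling w t x) = weightedScaling w (t * s) x := by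
  ext i
  simp only [weightedScaling, mul_pow]
  ring

theorem weightedScaling_one (w : ι → ℕ) (x : ι → ℝ) : weightedScaling w 1 x = x := by
  ext i
  simp [weightedScaling]

theorem hasDerivAt_weightedScaling_one (w : ι → ℕ) (x : ι → ℝ) :
    HasDerivAt (fun t => weightedScaling w t x) (fun i => (w i : ℝ) * x i) 1 := by
  rw [hasDerivAt_pi]
  intro i
  simpa [weightedScaling] using (hasDerivAt_pow (w i) (1 : ℝ)).mul_const (x i)

theorem hasDerivAt_comp_weightedScaling_one [Fintype ι] [DecidableEq ι] (w : ι → ℕ)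
    {g : (ι → ℝ) → ℝ} {x : ι → ℝ} (hg : DifferentiableAt ℝ g x) :
    HasDerivAt (fun t => g (weightedScaling w t x))
      (∑ i, (w i : ℝ) * x i * fderiv ℝ g x (Pi.single i 1)) 1 := by
  have hchain := hg.hasFDerivAt.comp_hasDerivAt_of_eq 1 (hasDerivAt_weightedScaling_one w x)
    (weightedScaling_one w x).symm
  rw [pi_eq_sum_univ' fun i => (w i : ℝ) * x i, map_sum] at hchain
  refine hchain.congr_deriv ?_
  simp [mul_comm]

theorem pow_succ_mul_integral_comp_weightedScaling (w : ι → ℕ) (n : ℕ)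
    (f : (ι → ℝ) → ℝ) (x : ι → ℝ) (t : ℝ) :
    t ^ (n + 1) * ∫ s in (0 : ℝ)..1, s ^ n * f (weightedScaling w s (weightedScaling w t x)) =
      ∫ u in (0 : ℝ)..t, u ^ n * f (weightedScaling w u x) := by
  have hsubst := smul_integral_comp_mul_left (a := 0) (b := 1)
    (fun u => u ^ n * f (weightedScaling w u x)) t
  simp only [mul_zero, mul_one, smul_eq_mul] at hsubst
  rw [← hsubst, pow_succ', mul_assoc, ← integral_const_mul]
  simp only [weightedScaling_weightedScaling, mul_pow, mul_assoc]

end WeightedScaling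

open Finset intervalIntegral in
theorem euler_divergence_integral_solution_general
    (q : ℕ) (w : Fin q → ℕ) (hw : 1 ≤ ∑ i, w i)
    (f : (Fin q → ℝ) → ℝ) (hf : ContDiff ℝ (⊤ : ℕ∞) f)
    (g : (Fin q → ℝ) → ℝ)
    (hg : g = fun x : Fin q → ℝ =>
      ∫ s in (0:ℝ)..1, s ^ ((∑ i, w i) - 1) * f (fun i => s ^ (w i) * x i)) :
    ContDiff ℝ (⊤ : ℕ∞) g ∧
      ∀ x : Fin q → ℝ,
        (∑ i, (w i : ℝ) * x i * fderiv ℝ g x (Pi.single i 1)) +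
          (∑ i, (w i : ℝ)) * g x = f x := by
  set α := (∑ i, w i) - 1
  have hW : α + 1 = ∑ i, w i := Nat.sub_add_cancel hw
  have hg_smooth : ContDiff ℝ (⊤ : ℕ∞) g := by
    have hΦ : ContDiff ℝ (⊤ : ℕ∞) fun p : (Fin q → ℝ) × ℝ =>
        p.2 ^ α * f (weightedScaling w p.2 p.1) :=
      (contDiff_snd.pow α).mul <| hf.comp <| contDiff_pi.2 fun i =>
        (contDiff_snd.pow (w i)).mul ((contDiff_apply ℝ ℝ i).comp contDiff_fst)
    rw [hg]
    exact contDiff_infty.2 fun n =>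
      contDiff_intervalIntegral_of_contDiff (hΦ.of_le (mod_cast le_top)) 0 1
  refine ⟨hg_smooth, fun x => ?_⟩
  have hscaling (t : ℝ) : t ^ (α + 1) * g (weightedScaling w t x) =
      ∫ u in (0 : ℝ)..t, u ^ α * f (weightedScaling w u x) := by
    rw [hg]
    exact pow_succ_mul_integral_comp_weightedScaling w α f x t
  have hlhs : HasDerivAt (fun t => t ^ (α + 1) * g (weightedScaling w t x)) _ 1 :=
    (hasDerivAt_pow (α + 1) 1).mul
      (hasDerivAt_comp_weightedScaling_one w (hg_smooth.differentiable (by simp) x))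
  have hk : Continuous fun u => u ^ α * f (weightedScaling w u x) := by fun_prop
  have hrhs := integral_hasDerivAt_right (a := 0) (b := 1)
    (f := fun u => u ^ α * f (weightedScaling w u x))
    (hk.intervalIntegrable _ _) (hk.stronglyMeasurableAtFilter _ _) hk.continuousAt
  rw [funext hscaling] at hlhs
  have hderivs_eq := hlhs.unique hrhs
  simp only [weightedScaling_one, one_pow, one_mul, mul_one, hW] at hderivs_eq
  push_cast at hderivs_eq
  linarith

open Finset intervalIntegral in
/-- The explicit integral solution from the proof of Proposition 2.10 (prEuler):
`g x = ∫₀¹ s^α f(F_s x) ds`, with `α = (∑ wᵢ) - 1` and `F_s` the weighted scaling,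
is smooth and solves `∑ i, wᵢ xᵢ ∂g/∂xᵢ + (∑ i, wᵢ) g = f`. -/
theorem euler_divergence_integral_solution
    (q : ℕ) (hq : 1 ≤ q) (w : Fin q → ℕ) (hw : 1 ≤ ∑ i, w i)
    (f : (Fin q → ℝ) → ℝ) (hf : ContDiff ℝ (⊤ : ℕ∞) f)
    (g : (Fin q → ℝ) → ℝ)
    (hg : g = fun x : Fin q → ℝ =>
      ∫ s in (0:ℝ)..1, s ^ ((∑ i, w i) - 1) * f (fun i => s ^ (w i) * x i)) :
    ContDiff ℝ (⊤ : ℕ∞) g ∧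
      ∀ x : Fin q → ℝ,
        (∑ i, (w i : ℝ) * x i * fderiv ℝ g x (Pi.single i 1)) +
          (∑ i, (w i : ℝ)) * g x = f x :=
  euler_divergence_integral_solution_general q w hw f hf g hg
end

section
/- Let q ≥ 1, let w₁,…,w_q be non-negative integers, and let c be a real number with c > 0. For every C^∞ function f : ℝ^q → ℝ there exists a C^∞ function g : ℝ^q → ℝ such that Σ_{i=1}^q w_i·x_i·(∂g/∂x_i)(x) + c·g(x) = f(x) for all x ∈ ℝ^q. -/
/-!
The solution is `g(x) = ∫₀¹ s^(c-1) f(s^w x) ds`, where `s^w x = (s^{w₁}x₁, …, s^{w_q}x_q)`.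
Differentiating under the integral, `∂ᵢg` is the same construction with `c` replaced by `c + wᵢ`
applied to `∂ᵢf`; since `c + wᵢ > 0` again, induction on the order of differentiation shows that
`g` is smooth. The equation itself is the fundamental theorem of calculus for
`s ↦ s^c f(s^w x)` on `[0, 1]`, whose derivative is `s^(c-1)` times
`c f(s^w x) + ∑ wᵢ xᵢ s^{wᵢ} ∂ᵢf(s^w x)`.
-/

open MeasureTheory Set Metric Filter intervalIntegral
open scoped Interval ContDiff

namespace WeightedEuler

lemma intervalIntegrable_rpow_sub_one_smul {E : Type*} [NormedAddCommGroup E] [NormedSpace ℝ E]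
    {c : ℝ} (hc : 0 < c) {φ : ℝ → E} (hφ : Continuous φ) (a b : ℝ) :
    IntervalIntegrable (fun s => s ^ (c - 1) • φ s) volume a b :=
  (intervalIntegrable_rpow' (by linarith)).smul_continuousOn hφ.continuousOn

lemma clm_apply_eq_sum_mul_single {ι : Type*} [Fintype ι] [DecidableEq ι]
    (L : (ι → ℝ) →L[ℝ] ℝ) (v : ι → ℝ) : L v = ∑ i, v i * L (Pi.single i 1) := by
  conv_lhs => rw [← Finset.univ_sum_single v, map_sum]
  refine Finset.sum_congr rfl fun i _ => ?_
  rw [← smul_eq_mul, ← L.map_smul, ← Pi.single_smul', smul_eq_mul, mul_one]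

variable {ι : Type*} (w : ι → ℕ)

noncomputable def weightedScale (s : ℝ) : (ι → ℝ) →L[ℝ] (ι → ℝ) :=
  ContinuousLinearMap.pi fun i => s ^ w i • ContinuousLinearMap.proj i

@[simp]
lemma weightedScale_apply (s : ℝ) (x : ι → ℝ) (i : ι) : weightedScale w s x i = s ^ w i * x i :=
  rfl

lemma weightedScale_one_apply (x : ι → ℝ) : weightedScale w 1 x = x := by
  ext; simp

lemma weightedScale_single [DecidableEq ι] (s : ℝ) (i : ι) :
    weightedScale w s (Pi.single i 1) = s ^ w i • Pi.single i 1 := by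
  ext j; by_cases h : j = i <;> simp [h]

lemma continuous_weightedScale : Continuous (weightedScale (ι := ι) w) :=
  (ContinuousLinearMap.piEquivL ℝ (ι → ℝ) fun _ : ι => ℝ).continuous.comp <|
    continuous_pi fun _ => (continuous_pow _).smul continuous_const

lemma hasDerivAt_weightedScale_apply {s : ℝ} (hs : 0 < s) (x : ι → ℝ) :
    HasDerivAt (fun t => weightedScale w t x) (fun i => w i * s ^ ((w i : ℝ) - 1) * x i) s := by
  refine hasDerivAt_pi.2 fun i => ?_
  simpa using (Real.hasDerivAt_rpow_const (p := w i) (Or.inl hs.ne')).mul_const (x i)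

variable [Fintype ι]

lemma continuous_fderiv_comp_weightedScale {F : (ι → ℝ) → ℝ} (hF : ContDiff ℝ 1 F) :
    Continuous fun p : ℝ × (ι → ℝ) =>
      (fderiv ℝ F (weightedScale w p.1 p.2)).comp (weightedScale w p.1) :=
  have hS := (continuous_weightedScale w).comp continuous_fst
  ((hF.continuous_fderiv one_ne_zero).comp (hS.clm_apply continuous_snd)).clm_comp hS

noncomputable def eulerSolution (c : ℝ) (F : (ι → ℝ) → ℝ) (x : ι → ℝ) : ℝ :=
  ∫ s in (0 : ℝ)..1, s ^ (c - 1) * F (weightedScale w s x)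

lemma intervalIntegrable_rpow_mul_comp_weightedScale {c : ℝ} (hc : 0 < c) {F : (ι → ℝ) → ℝ}
    (hF : Continuous F) (x : ι → ℝ) :
    IntervalIntegrable (fun s => s ^ (c - 1) * F (weightedScale w s x)) volume 0 1 :=
  intervalIntegrable_rpow_sub_one_smul hc
    (hF.comp ((continuous_weightedScale w).clm_apply continuous_const)) 0 1

lemma intervalIntegrable_rpow_smul_fderiv_comp_weightedScale {c : ℝ} (hc : 0 < c)
    {F : (ι → ℝ) → ℝ} (hF : ContDiff ℝ 1 F) (x : ι → ℝ) :
    IntervalIntegrable (fun s : ℝ => s ^ (c - 1) •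
      (fderiv ℝ F (weightedScale w s x)).comp (weightedScale w s)) volume 0 1 :=
  intervalIntegrable_rpow_sub_one_smul hc
    ((continuous_fderiv_comp_weightedScale w hF).comp (Continuous.prodMk_left x)) 0 1

lemma hasFDerivAt_eulerSolution {c : ℝ} (hc : 0 < c) {F : (ι → ℝ) → ℝ} (hF : ContDiff ℝ 1 F)
    (x₀ : ι → ℝ) :
    HasFDerivAt (eulerSolution w c F)
      (∫ s in (0 : ℝ)..1, s ^ (c - 1) •
        (fderiv ℝ F (weightedScale w s x₀)).comp (weightedScale w s)) x₀ := by
  have hD := continuous_fderiv_comp_weightedScale w hF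
  obtain ⟨C, hC⟩ := (isCompact_Icc.prod (isCompact_closedBall x₀ 1)).exists_bound_of_continuousOn
    (hD.continuousOn (s := Icc (0 : ℝ) 1 ×ˢ closedBall x₀ 1))
  refine intervalIntegral.hasFDerivAt_integral_of_dominated_of_fderiv_le
    (F := fun x s => s ^ (c - 1) * F (weightedScale w s x))
    (F' := fun x s => s ^ (c - 1) • (fderiv ℝ F (weightedScale w s x)).comp (weightedScale w s))
    (bound := fun s => s ^ (c - 1) * C)
    (ball_mem_nhds x₀ one_pos) (Eventually.of_forall fun x => ?_) ?_ ?_ ?_ ?_ ?_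
  · exact (intervalIntegrable_iff.1 <|
      intervalIntegrable_rpow_mul_comp_weightedScale w hc hF.continuous x).1
  · exact intervalIntegrable_rpow_mul_comp_weightedScale w hc hF.continuous x₀
  · exact (intervalIntegrable_iff.1 <|
      intervalIntegrable_rpow_smul_fderiv_comp_weightedScale w hc hF x₀).1
  · refine Eventually.of_forall fun s hs x hx => ?_
    rw [uIoc_of_le zero_le_one] at hs
    rw [norm_smul, Real.norm_of_nonneg (Real.rpow_nonneg hs.1.le _)]
    exact mul_le_mul_of_nonneg_left (hC (s, x) ⟨⟨hs.1.le, hs.2⟩, ball_subset_closedBall hx⟩)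
      (Real.rpow_nonneg hs.1.le _)
  · exact (intervalIntegrable_rpow' (by linarith)).mul_const C
  · refine Eventually.of_forall fun s _ x _ => ?_
    exact ((hF.differentiable one_ne_zero _).hasFDerivAt.comp x
      (weightedScale w s).hasFDerivAt).const_smul (s ^ (c - 1))

variable [DecidableEq ι]

noncomputable def partialDeriv (F : (ι → ℝ) → ℝ) (i : ι) (y : ι → ℝ) : ℝ :=
  fderiv ℝ F y (Pi.single i 1)

lemma contDiff_partialDeriv {m n : WithTop ℕ∞} {F : (ι → ℝ) → ℝ} (hF : ContDiff ℝ n F)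
    (hmn : m + 1 ≤ n) (i : ι) : ContDiff ℝ m (partialDeriv F i) :=
  (hF.fderiv_right hmn).clm_apply contDiff_const

lemma fderiv_eulerSolution_apply_single {c : ℝ} (hc : 0 < c) {F : (ι → ℝ) → ℝ}
    (hF : ContDiff ℝ 1 F) (x : ι → ℝ) (i : ι) :
    fderiv ℝ (eulerSolution w c F) x (Pi.single i 1) =
      eulerSolution w (c + w i) (partialDeriv F i) x := by
  rw [(hasFDerivAt_eulerSolution w hc hF x).fderiv, ContinuousLinearMap.intervalIntegral_apply
    (intervalIntegrable_rpow_smul_fderiv_comp_weightedScale w hc hF x)]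
  refine integral_congr_ae (Eventually.of_forall fun s hs => ?_)
  rw [uIoc_of_le zero_le_one] at hs
  simp only [smul_apply, ContinuousLinearMap.comp_apply,
    weightedScale_single, map_smul, smul_eq_mul, partialDeriv]
  rw [add_sub_right_comm, Real.rpow_add_natCast hs.1.ne', mul_assoc]

lemma contDiff_eulerSolution {c : ℝ} (hc : 0 < c) {F : (ι → ℝ) → ℝ} (hF : ContDiff ℝ ∞ F) :
    ContDiff ℝ ∞ (eulerSolution w c F) := by
  refine contDiff_infty.2 fun n => ?_
  induction n generalizing c F with
  | zero =>
    exact contDiff_zero.2 (continuous_iff_continuousAt.2 fun x =>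
      (hasFDerivAt_eulerSolution w hc (hF.of_le (mod_cast le_top)) x).continuousAt)
  | succ n ih =>
    have hF1 : ContDiff ℝ 1 F := hF.of_le (mod_cast le_top)
    rw [Nat.cast_succ, contDiff_succ_iff_fderiv_apply]
    refine ⟨fun x => (hasFDerivAt_eulerSolution w hc hF1 x).differentiableAt, by simp,
      fun y => ?_⟩
    have hpartials : (fun x => fderiv ℝ (eulerSolution w c F) x y) =
        fun x => ∑ i, y i * eulerSolution w (c + w i) (partialDeriv F i) x := by
      ext x
      simp only [clm_apply_eq_sum_mul_single _ y, fderiv_eulerSolution_apply_single w hc hF1]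
    rw [hpartials]
    exact ContDiff.sum fun i _ =>
      contDiff_const.mul (ih (by positivity) (contDiff_partialDeriv hF (by simp) i))

lemma hasDerivAt_rpow_mul_comp_weightedScale (c : ℝ) {F : (ι → ℝ) → ℝ}
    (hF : Differentiable ℝ F) (x : ι → ℝ) {s : ℝ} (hs : 0 < s) :
    HasDerivAt (fun t => t ^ c * F (weightedScale w t x))
      (c * (s ^ (c - 1) * F (weightedScale w s x)) + ∑ i, (w i : ℝ) * x i *
        (s ^ (c + w i - 1) * partialDeriv F i (weightedScale w s x))) s := by
  refine ((Real.hasDerivAt_rpow_const (p := c) (Or.inl hs.ne')).mul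
    ((hF _).hasFDerivAt.comp_hasDerivAt s (hasDerivAt_weightedScale_apply w hs x))).congr_deriv ?_
  rw [clm_apply_eq_sum_mul_single, Finset.mul_sum, ← mul_assoc]
  congr 1
  refine Finset.sum_congr rfl fun i _ => ?_
  rw [show c + w i - 1 = c + (w i - 1) by ring, Real.rpow_add hs, partialDeriv]
  ring

lemma sum_mul_eulerSolution_partialDeriv_add {c : ℝ} (hc : 0 < c) {F : (ι → ℝ) → ℝ}
    (hF : ContDiff ℝ 1 F) (x : ι → ℝ) :
    ∑ i, (w i : ℝ) * x i * eulerSolution w (c + w i) (partialDeriv F i) x +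
      c * eulerSolution w c F x = F x := by
  have hint := (intervalIntegrable_rpow_mul_comp_weightedScale w hc hF.continuous x).const_mul c
  have hint_i : ∀ i, IntervalIntegrable (fun s : ℝ => (w i : ℝ) * x i *
      (s ^ (c + w i - 1) * partialDeriv F i (weightedScale w s x))) volume 0 1 := fun i =>
    (intervalIntegrable_rpow_mul_comp_weightedScale w (by positivity)
      (contDiff_partialDeriv (m := 0) hF le_rfl i).continuous x).const_mul _
  have hsum_int := IntervalIntegrable.sum Finset.univ fun i _ => hint_i i
  rw [Finset.sum_fn] at hsum_int
  have hFTC := integral_eq_sub_of_hasDerivAt_of_le zero_le_one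
    ((Real.continuous_rpow_const hc.le).mul
      (hF.continuous.comp ((continuous_weightedScale w).clm_apply continuous_const))).continuousOn
    (fun s hs => hasDerivAt_rpow_mul_comp_weightedScale w c (hF.differentiable one_ne_zero) x hs.1)
    (hint.add hsum_int)
  rw [integral_add hint hsum_int, integral_finsetSum fun i _ => hint_i i] at hFTC
  simp only [intervalIntegral.integral_const_mul, Pi.mul_apply, Function.comp_apply,
    Real.one_rpow, Real.zero_rpow hc.ne', weightedScale_one_apply, one_mul, zero_mul,
    sub_zero] at hFTC
  rw [← hFTC, add_comm]
  rfl

end WeightedEuler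

open Finset in
theorem weighted_euler_equation_solvable_general
    (q : ℕ) (w : Fin q → ℕ) (c : ℝ) (hc : 0 < c)
    (f : (Fin q → ℝ) → ℝ) (hf : ContDiff ℝ (⊤ : ℕ∞) f) :
    ∃ g : (Fin q → ℝ) → ℝ, ContDiff ℝ (⊤ : ℕ∞) g ∧
      ∀ x : Fin q → ℝ,
        (∑ i, (w i : ℝ) * x i * fderiv ℝ g x (Pi.single i 1)) + c * g x = f x := by
  have hf1 : ContDiff ℝ 1 f := hf.of_le (mod_cast le_top)
  refine ⟨WeightedEuler.eulerSolution w c f, WeightedEuler.contDiff_eulerSolution w hc hf,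
    fun x => ?_⟩
  simp only [WeightedEuler.fderiv_eulerSolution_apply_single w hc hf1]
  exact WeightedEuler.sum_mul_eulerSolution_partialDeriv_add w hc hf1 x

open Finset in
/-- Common analytic core of Proposition 2.10 (prEuler) and Lemma 4.5 (rP): for non-negative
integer weights `w` and a real constant `c > 0`, the equation
`∑ i, wᵢ xᵢ ∂g/∂xᵢ + c·g = f` has a smooth solution `g` for every smooth `f`. -/
theorem weighted_euler_equation_solvable
    (q : ℕ) (hq : 1 ≤ q) (w : Fin q → ℕ) (c : ℝ) (hc : 0 < c)
    (f : (Fin q → ℝ) → ℝ) (hf : ContDiff ℝ (⊤ : ℕ∞) f) :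
    ∃ g : (Fin q → ℝ) → ℝ, ContDiff ℝ (⊤ : ℕ∞) g ∧
      ∀ x : Fin q → ℝ,
        (∑ i, (w i : ℝ) * x i * fderiv ℝ g x (Pi.single i 1)) + c * g x = f x :=
  weighted_euler_equation_solvable_general q w c hc f hf
end

section
/- Let q ≥ 1 and let h₀, h₁ : ℝ^q → ℝ be C^∞ functions with h₀(x) > 0 and h₁(x) > 0 for all x ∈ ℝ^q. Suppose there exists a C^∞ compactly supported vector field X : ℝ^q → ℝ^q such that h₀(x) − h₁(x) = (div X)(x) for all x, where div X = Σ_{i=1}^q ∂X_i/∂x_i. Then there exists a C^∞ map Φ : ℝ × ℝ^q → ℝ^q such that: Φ(0,·) is the identity of ℝ^q; for every t ∈ [0,1] the map Φ_t := Φ(t,·) is a diffeomorphism of ℝ^q; and h₁(Φ(1,x))·det(DΦ₁(x)) = h₀(x) for all x ∈ ℝ^q, where DΦ₁(x) denotes the derivative of Φ₁ at x. (That is, Φ₁ pulls back the volume form h₁·dx₁∧…∧dx_q to h₀·dx₁∧…∧dx_q.) -/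
/-!
Moser's path `h₀ - σ(t) (h₀ - h₁)`, with `σ` a smooth step from `0` to `1`, is realised by
composing finitely many moves along coordinate axes instead of integrating the field `X / hₜ`.
Write `σ(t) (h₀ - h₁) = σ(t) ∑ᵢ ∂ᵢXᵢ` as a sum of `N q` pieces `∂ᵢu` with `u = σ(t) Xᵢ / N`, the
index `i` running cyclically; for `N` large every intermediate density stays positive. Removing
one piece only moves the `i`-th coordinate: on each line parallel to `eᵢ`, `y` goes to the
solution `ψ` of `A(ψ) - u(ψ) = A(y)`, where `A` is a primitive of the current density `g` along
the line. Both sides are increasing and agree where `u = 0`, so `ψ` exists and is unique, the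
implicit function theorem makes it smooth in all variables, and since `A - u` is a primitive of
the next density `g'`, the Jacobian `ψ' = g / g' ∘ ψ` is exactly the pullback condition. At
`t = 0` all pieces vanish and every move is the identity.
-/

open Finset Function intervalIntegral MeasureTheory
open scoped ContDiff Topology

section FiberPrimitive

variable {E : Type*}

noncomputable def fiberPrimitive (g : ℝ × E → ℝ) (z : ℝ × E) : ℝ :=
  ∫ r in (0 : ℝ)..z.1, g (r, z.2)

theorem hasDerivAt_fiberPrimitive [TopologicalSpace E] {g : ℝ × E → ℝ} (hg : Continuous g)
    (y : ℝ) (p : E) :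
    HasDerivAt (fun y => fiberPrimitive g (y, p)) (g (y, p)) y := by
  have hc : Continuous fun r => g (r, p) := by fun_prop
  exact integral_hasDerivAt_right (hc.intervalIntegrable _ _) (hc.stronglyMeasurableAtFilter _ _)
    hc.continuousAt

end FiberPrimitive

section Calculus

variable {E : Type*} [NormedAddCommGroup E] [NormedSpace ℝ E]

theorem hasFDerivAt_intervalIntegral_of_contDiff_s7 {F : Type*} [NormedAddCommGroup F]
    [NormedSpace ℝ F] [CompleteSpace F] {Ψ : ℝ × E → F} (hΨ : ContDiff ℝ 1 Ψ) (a b : ℝ)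
    (x₀ : E) :
    HasFDerivAt (fun x => ∫ s in a..b, Ψ (s, x))
      (∫ s in a..b, fderiv ℝ Ψ (s, x₀) ∘L .inr ℝ ℝ E) x₀ := by
  have hD : Continuous fun z => fderiv ℝ Ψ z ∘L .inr ℝ ℝ E :=
    (hΨ.continuous_fderiv one_ne_zero).clm_comp continuous_const
  obtain ⟨C, hC⟩ := (isCompact_uIcc (a := a) (b := b)).exists_bound_of_continuousOn
    (f := fun s => fderiv ℝ Ψ (s, x₀) ∘L .inr ℝ ℝ E) (by fun_prop)
  have hbound : ∀ᶠ x in 𝓝 x₀, ∀ s ∈ Set.uIcc a b,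
      ‖fderiv ℝ Ψ (s, x) ∘L .inr ℝ ℝ E‖ < C + 1 := by
    refine isCompact_uIcc.eventually_forall_of_forall_eventually fun s hs => ?_
    have : ContinuousAt (fun z : E × ℝ => ‖fderiv ℝ Ψ (z.2, z.1) ∘L .inr ℝ ℝ E‖) (x₀, s) :=
      (hD.comp continuous_swap).norm.continuousAt
    exact this.eventually_lt continuousAt_const ((hC s hs).trans_lt (lt_add_one C))
  have hslice : ∀ x : E, Continuous fun s : ℝ => Ψ (s, x) := fun x => by fun_prop
  refine hasFDerivAt_integral_of_dominated_of_fderiv_le (bound := fun _ => C + 1)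
    hbound (.of_forall fun x => (hslice x).aestronglyMeasurable)
    ((hslice x₀).intervalIntegrable a b) (hD.comp (by fun_prop)).aestronglyMeasurable
    (.of_forall fun s hs x hx => (hx s (Set.uIoc_subset_uIcc hs)).le)
    intervalIntegrable_const (.of_forall fun s _ x _ => ?_)
  exact (hΨ.differentiable one_ne_zero (s, x)).hasFDerivAt.comp x (hasFDerivAt_prodMk_right s x)

theorem contDiff_intervalIntegral_of_contDiff_s7 [FiniteDimensional ℝ E] {F : Type*}
    [NormedAddCommGroup F] [NormedSpace ℝ F] [CompleteSpace F] {n : ℕ} {Ψ : ℝ × E → F}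
    (hΨ : ContDiff ℝ n Ψ) (a b : ℝ) : ContDiff ℝ n fun x => ∫ s in a..b, Ψ (s, x) := by
  induction n generalizing Ψ with
  | zero => exact contDiff_zero.mpr (by have := hΨ.continuous; fun_prop)
  | succ n ih =>
    have hΨ1 : ContDiff ℝ 1 Ψ := hΨ.of_le (by exact_mod_cast Nat.le_add_left 1 n)
    have hD := hasFDerivAt_intervalIntegral_of_contDiff_s7 hΨ1 a b
    rw [Nat.cast_add, Nat.cast_one, contDiff_succ_iff_fderiv_apply]
    refine ⟨fun x => (hD x).differentiableAt, by simp, fun y => ?_⟩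
    have hint (x : E) :
        IntervalIntegrable (fun s => fderiv ℝ Ψ (s, x) ∘L .inr ℝ ℝ E) volume a b :=
      (((hΨ1.continuous_fderiv one_ne_zero).comp (by fun_prop)).clm_comp
        continuous_const).intervalIntegrable a b
    simp_rw [(hD _).fderiv, ContinuousLinearMap.intervalIntegral_apply (hint _),
      ContinuousLinearMap.comp_apply, ContinuousLinearMap.inr_apply]
    exact ih ((hΨ.fderiv_right le_rfl).clm_apply contDiff_const)

theorem contDiff_infty_intervalIntegral [FiniteDimensional ℝ E] {F : Type*}
    [NormedAddCommGroup F] [NormedSpace ℝ F] [CompleteSpace F] {Ψ : ℝ × E → F}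
    (hΨ : ContDiff ℝ ∞ Ψ) (a b : ℝ) : ContDiff ℝ ∞ fun x => ∫ s in a..b, Ψ (s, x) :=
  contDiff_infty.mpr fun n =>
    contDiff_intervalIntegral_of_contDiff_s7 (hΨ.of_le (by exact_mod_cast le_top)) a b

theorem contDiff_fiberPrimitive [FiniteDimensional ℝ E] {g : ℝ × E → ℝ}
    (hg : ContDiff ℝ ∞ g) : ContDiff ℝ ∞ (fiberPrimitive g) := by
  have hrescale : fiberPrimitive g = fun z => z.1 • ∫ s in (0 : ℝ)..1, g (z.1 * s, z.2) := by
    ext z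
    simpa [fiberPrimitive] using
      (smul_integral_comp_mul_left (a := 0) (b := 1) (fun r => g (r, z.2)) z.1).symm
  rw [hrescale]
  exact contDiff_fst.smul (contDiff_infty_intervalIntegral
    (Ψ := fun w : ℝ × (ℝ × E) => g (w.2.1 * w.1, w.2.2)) (by fun_prop) 0 1)

theorem ContinuousLinearMap.isInvertible_of_apply_one_ne_zero {L : ℝ →L[ℝ] ℝ} (hL : L 1 ≠ 0) :
    L.IsInvertible :=
  .of_inverse (g := (L 1)⁻¹ • .id ℝ ℝ) (ext_ring (by simp [hL])) (ext_ring (by simp [hL]))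

theorem contDiff_of_apply_eq_zero_of_hasDerivAt_pos [CompleteSpace E] {f f' : E × ℝ → ℝ}
    (hf : ContDiff ℝ ∞ f) (hf' : ∀ x y, HasDerivAt (fun y => f (x, y)) (f' (x, y)) y)
    (hf'_pos : ∀ w, 0 < f' w) {ψ : E → ℝ} (hψ : ∀ x, f (x, ψ x) = 0) : ContDiff ℝ ∞ ψ := by
  refine contDiff_iff_contDiffAt.mpr fun x₀ => ?_
  have hfu := hf.contDiffAt (x := (x₀, ψ x₀))
  have hpartial : (fderiv ℝ f (x₀, ψ x₀) ∘L .inr ℝ E ℝ) 1 = f' (x₀, ψ x₀) :=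
    (((hf.differentiable (by simp) _).hasFDerivAt.comp_hasDerivAt (ψ x₀)
      ((hasDerivAt_const _ x₀).prodMk (hasDerivAt_id _))).unique (hf' x₀ (ψ x₀)))
  have hinv : (fderiv ℝ f (x₀, ψ x₀) ∘L .inr ℝ E ℝ).IsInvertible :=
    ContinuousLinearMap.isInvertible_of_apply_one_ne_zero (hpartial ▸ (hf'_pos _).ne')
  have hφψ : hfu.implicitFunction (by simp) hinv =ᶠ[𝓝 x₀] ψ := by
    filter_upwards [hfu.eventually_apply_implicitFunction (by simp) hinv] with x hx
    exact (strictMono_of_hasDerivAt_pos (hf' x) fun y => hf'_pos (x, y)).injective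
      (hx.trans ((hψ x₀).trans (hψ x).symm))
  exact (hfu.contDiffAt_implicitFunction (by simp) hinv).congr_of_eventuallyEq hφψ.symm

theorem exists_contDiff_fiberwise_solution [CompleteSpace E] {A B a b : ℝ × E → ℝ} {R : ℝ}
    (hA : ContDiff ℝ ∞ A) (hB : ContDiff ℝ ∞ B)
    (ha : ∀ y p, HasDerivAt (fun y => A (y, p)) (a (y, p)) y)
    (hb : ∀ y p, HasDerivAt (fun y => B (y, p)) (b (y, p)) y)
    (ha_pos : ∀ z, 0 < a z) (hb_pos : ∀ z, 0 < b z)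
    (hAB : ∀ y p, R ≤ |y| → A (y, p) = B (y, p)) :
    ∃ ψ : ℝ × E → ℝ, ContDiff ℝ ∞ ψ ∧ (∀ z, B (ψ z, z.2) = A z) ∧
      (∀ z y, B (y, z.2) = A z → y = ψ z) ∧
      ∀ z, HasDerivAt (fun x => ψ (x, z.2)) (a z / b (ψ z, z.2)) z.1 := by
  have hAmono (p : E) : StrictMono fun y => A (y, p) :=
    strictMono_of_hasDerivAt_pos (fun y => ha y p) fun y => ha_pos _
  have hBmono (p : E) : StrictMono fun y => B (y, p) :=
    strictMono_of_hasDerivAt_pos (fun y => hb y p) fun y => hb_pos _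
  have hsolve (z : ℝ × E) : ∃ y, B (y, z.2) = A z := by
    obtain ⟨x, p⟩ := z
    rcases le_or_gt R |x| with hx | hx
    · exact ⟨x, (hAB x p hx).symm⟩
    · obtain ⟨hRx, hxR⟩ := abs_lt.mp hx
      have hR : |R| = R := abs_of_pos (by linarith)
      have hBc : Continuous fun y => B (y, p) := by have := hB.continuous; fun_prop
      have hmem : A (x, p) ∈ Set.Icc (B (-R, p)) (B (R, p)) := by
        rw [← hAB (-R) p (by rw [abs_neg, hR]), ← hAB R p hR.ge]
        exact ⟨(hAmono p).monotone hRx.le, (hAmono p).monotone hxR.le⟩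
      obtain ⟨y, -, hy⟩ := intermediate_value_Icc (by linarith) hBc.continuousOn hmem
      exact ⟨y, hy⟩
  choose ψ hψ using hsolve
  have hψ_smooth : ContDiff ℝ ∞ ψ :=
    contDiff_of_apply_eq_zero_of_hasDerivAt_pos (f := fun w => B (w.2, w.1.2) - A w.1)
      (by fun_prop) (fun z y => (hb y z.2).sub_const (A z)) (fun w => hb_pos (w.2, w.1.2))
      fun z => sub_eq_zero.mpr (hψ z)
  refine ⟨ψ, hψ_smooth, hψ, fun z y hy => (hBmono z.2).injective (hy.trans (hψ z).symm),
    fun ⟨x, p⟩ => ?_⟩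
  have hψx : HasDerivAt (fun x => ψ (x, p)) (deriv (fun x => ψ (x, p)) x) x :=
    ((hψ_smooth.comp (contDiff_id.prodMk contDiff_const)).differentiable (by simp) x).hasDerivAt
  have hchain := (hb (ψ (x, p)) p).comp x hψx
  rw [show ((fun y => B (y, p)) ∘ fun x => ψ (x, p)) = fun x => A (x, p) from
    funext fun x => hψ (x, p)] at hchain
  convert hψx using 1
  rw [div_eq_iff (hb_pos _).ne', ← hchain.unique (ha x p), mul_comm]

end Calculus

theorem LinearMap.det_id_add_smulRight {R M : Type*} [CommRing R] [AddCommGroup M] [Module R M]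
    [Module.Free R M] [Module.Finite R M] (f : M →ₗ[R] R) (v : M) :
    LinearMap.det (LinearMap.id + f.smulRight v) = 1 + f v := by
  classical
  let b := Module.Free.chooseBasis R M
  rw [← LinearMap.det_toMatrix b, map_add, LinearMap.toMatrix_id, LinearMap.toMatrix_smulRight,
    Matrix.vecMulVec_eq Unit, Matrix.det_one_add_replicateCol_mul_replicateRow]
  conv_rhs => rw [← b.sum_repr v, map_sum]
  simp only [map_smul, smul_eq_mul, dotProduct, Function.comp_apply, mul_comm]

section Update

variable {ι : Type*} [DecidableEq ι]

theorem update_eq_add_smul_single (x : ι → ℝ) (i : ι) (v : ℝ) :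
    update x i v = x + (v - x i) • Pi.single i 1 := by
  ext j
  rcases eq_or_ne j i with rfl | hj <;> simp [*]

theorem ContDiff.update [Fintype ι] {W : Type*} [NormedAddCommGroup W] [NormedSpace ℝ W]
    {n : WithTop ℕ∞} {f : W → ι → ℝ} {v : W → ℝ} (hf : ContDiff ℝ n f) (hv : ContDiff ℝ n v)
    (i : ι) :
    ContDiff ℝ n fun w => update (f w) i (v w) := by
  simp_rw [update_eq_add_smul_single]
  fun_prop

theorem DifferentiableAt.hasDerivAt_update [Fintype ι] {φ : (ι → ℝ) → ℝ} {x : ι → ℝ}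
    (hφ : DifferentiableAt ℝ φ x) (i : ι) :
    HasDerivAt (fun r => φ (update x i r)) (fderiv ℝ φ x (Pi.single i 1)) (x i) := by
  have hφ' : HasFDerivAt φ (fderiv ℝ φ x) (update x i (x i)) := by simpa using hφ.hasFDerivAt
  exact hφ'.comp_hasDerivAt (x i) (_root_.hasDerivAt_update x i (x i))

theorem det_fderiv_update_self [Fintype ι] {φ : (ι → ℝ) → ℝ} {x : ι → ℝ} {i : ι} {c : ℝ}
    (hφ : DifferentiableAt ℝ φ x) (hc : HasDerivAt (fun r => φ (update x i r)) c (x i)) :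
    LinearMap.det (fderiv ℝ (fun y => update y i (φ y)) x : (ι → ℝ) →ₗ[ℝ] ι → ℝ) = c := by
  have hD : HasFDerivAt (fun y => update y i (φ y))
      (.id ℝ _ + (fderiv ℝ φ x - .proj i).smulRight (Pi.single i 1)) x := by
    simp_rw [update_eq_add_smul_single]
    exact (hasFDerivAt_id x).add ((hφ.hasFDerivAt.sub (hasFDerivAt_apply i x)).smul_const _)
  have hpartial : fderiv ℝ φ x (Pi.single i 1) = c := (hφ.hasDerivAt_update i).unique hc
  rw [hD.fderiv, ← hpartial]
  convert LinearMap.det_id_add_smulRight (fderiv ℝ φ x - .proj i : (ι → ℝ) →L[ℝ] ℝ).toLinearMap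
    (Pi.single i 1) using 1 <;> simp

end Update

section TransportChain

variable {V P : Type*}

def transportChain (e : ℕ → V × P → V) : ℕ → V × P → V
  | 0 => Prod.fst
  | m + 1 => fun z => e m (transportChain e m z, z.2)

theorem transportChain_apply_of_forall {e : ℕ → V × P → V} {t : P} {n : ℕ}
    (ht : ∀ m < n, ∀ x, e m (x, t) = x) (x : V) : transportChain e n (x, t) = x := by
  induction n with
  | zero => rfl
  | succ n ih =>
    simp [transportChain, ih fun m hm => ht m (by omega), ht n (by omega)]

end TransportChain

section Transport

variable {V P : Type*} [NormedAddCommGroup V] [NormedSpace ℝ V] [NormedAddCommGroup P]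
  [NormedSpace ℝ P]

/-- `e` is a smooth family, parametrized by `t : P`, of diffeomorphisms `e (·, t)` of `V`, each
pulling the density `g' (·, t)` back to `g (·, t)`. -/
structure IsSmoothTransport (g g' : V × P → ℝ) (e : V × P → V) : Prop where
  contDiff : ContDiff ℝ ∞ e
  exists_inverse : ∃ e' : V × P → V, ContDiff ℝ ∞ e' ∧ (∀ x t, e' (e (x, t), t) = x) ∧
    ∀ x t, e (e' (x, t), t) = x
  pullback : ∀ x t,
    g' (e (x, t), t) * LinearMap.det (fderiv ℝ (fun y => e (y, t)) x).toLinearMap = g (x, t)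

namespace IsSmoothTransport

variable {g g' g'' : V × P → ℝ} {e e₂ : V × P → V}

theorem id (g : V × P → ℝ) : IsSmoothTransport g g Prod.fst where
  contDiff := contDiff_fst
  exists_inverse := ⟨Prod.fst, contDiff_fst, fun _ _ => rfl, fun _ _ => rfl⟩
  pullback x t := by simp

theorem differentiable_slice (h : IsSmoothTransport g g' e) (t : P) :
    Differentiable ℝ fun y => e (y, t) :=
  (h.contDiff.comp (contDiff_id.prodMk contDiff_const)).differentiable (by simp)

theorem comp (h : IsSmoothTransport g g' e) (h₂ : IsSmoothTransport g' g'' e₂) :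
    IsSmoothTransport g g'' fun z => e₂ (e z, z.2) where
  contDiff := h₂.contDiff.comp (h.contDiff.prodMk contDiff_snd)
  exists_inverse := by
    obtain ⟨e', he', hl, hr⟩ := h.exists_inverse
    obtain ⟨e₂', he₂', hl₂, hr₂⟩ := h₂.exists_inverse
    exact ⟨fun z => e' (e₂' z, z.2), he'.comp (he₂'.prodMk contDiff_snd),
      fun x t => by simp [hl, hl₂], fun x t => by simp [hr, hr₂]⟩
  pullback x t := by
    have hcomp : (fun y => e₂ (e (y, t), t)) = (fun y => e₂ (y, t)) ∘ fun y => e (y, t) := rfl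
    rw [hcomp, fderiv_comp x (h₂.differentiable_slice t _) (h.differentiable_slice t x),
      ContinuousLinearMap.toLinearMap_comp, LinearMap.det_comp, ← mul_assoc, h₂.pullback,
      h.pullback]

theorem bijective_slice (h : IsSmoothTransport g g' e) (t : P) :
    Bijective fun x => e (x, t) := by
  obtain ⟨e', -, hl, hr⟩ := h.exists_inverse
  exact ⟨LeftInverse.injective (g := fun y => e' (y, t)) (hl · t),
    RightInverse.surjective (g := fun y => e' (y, t)) (hr · t)⟩

theorem contDiff_invFun_slice (h : IsSmoothTransport g g' e) (t : P) :
    ContDiff ℝ ∞ (invFun fun x => e (x, t)) := by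
  obtain ⟨e', he', -, hr⟩ := h.exists_inverse
  rw [invFun_eq_of_injective_of_rightInverse (g := fun y => e' (y, t))
    (h.bijective_slice t).injective (hr · t)]
  exact he'.comp (contDiff_id.prodMk contDiff_const)

end IsSmoothTransport

theorem isSmoothTransport_transportChain {G : ℕ → V × P → ℝ} {e : ℕ → V × P → V} {n : ℕ}
    (h : ∀ m < n, IsSmoothTransport (G m) (G (m + 1)) (e m)) :
    IsSmoothTransport (G 0) (G n) (transportChain e n) := by
  induction n with
  | zero => exact .id _
  | succ n ih =>
    exact (ih fun m hm => h m (by omega)).comp (h n (by omega))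

end Transport

section CoordinateStep

variable {ι P : Type*} [DecidableEq ι]

/-- The parameter `(update x i 0, t)` passed to `ψ` forgets `x i`, so the move leaves it
unchanged. -/
def coordinateMove (i : ι) (ψ : ℝ × ((ι → ℝ) × P) → ℝ) (z : (ι → ℝ) × P) : ι → ℝ :=
  update z.1 i (ψ (z.1 i, (update z.1 i 0, z.2)))

theorem coordinateMove_coordinateMove (i : ι) {ψ χ : ℝ × ((ι → ℝ) × P) → ℝ}
    (h : ∀ a p, χ (ψ (a, p), p) = a) (x : ι → ℝ) (t : P) :
    coordinateMove i χ (coordinateMove i ψ (x, t), t) = x := by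
  simp [coordinateMove, h]

variable [Fintype ι] [NormedAddCommGroup P] [NormedSpace ℝ P]

theorem contDiff_coordinateMove (i : ι) {ψ : ℝ × ((ι → ℝ) × P) → ℝ} (hψ : ContDiff ℝ ∞ ψ) :
    ContDiff ℝ ∞ (coordinateMove i ψ) :=
  contDiff_fst.update (hψ.comp (((contDiff_apply ℝ ℝ i).comp contDiff_fst).prodMk
    ((contDiff_fst.update contDiff_const i).prodMk contDiff_snd))) i

theorem isSmoothTransport_coordinateMove (i : ι) {g g' : (ι → ℝ) × P → ℝ}
    {ψ χ : ℝ × ((ι → ℝ) × P) → ℝ} (hψ : ContDiff ℝ ∞ ψ) (hχ : ContDiff ℝ ∞ χ)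
    (hψχ : ∀ a p, ψ (χ (a, p), p) = a) (hχψ : ∀ a p, χ (ψ (a, p), p) = a)
    (hg'_pos : ∀ z, 0 < g' z)
    (hψ_deriv : ∀ x t, HasDerivAt (fun r => ψ (r, (update x i 0, t)))
      (g (x, t) / g' (coordinateMove i ψ (x, t), t)) (x i)) :
    IsSmoothTransport g g' (coordinateMove i ψ) where
  contDiff := contDiff_coordinateMove i hψ
  exists_inverse := ⟨coordinateMove i χ, contDiff_coordinateMove i hχ,
    coordinateMove_coordinateMove i hχψ, coordinateMove_coordinateMove i hψχ⟩
  pullback x t := by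
    have hφ : ContDiff ℝ ∞ fun y => ψ (y i, (update y i 0, t)) :=
      hψ.comp ((contDiff_apply ℝ ℝ i).prodMk ((contDiff_id.update contDiff_const i).prodMk
        contDiff_const))
    have hdet := det_fderiv_update_self (i := i) (hφ.differentiable (by simp) x)
      (by simpa using hψ_deriv x t)
    set y := coordinateMove i ψ (x, t)
    calc _ = g' (y, t) * (g (x, t) / g' (y, t)) := by rw [← hdet]; rfl
      _ = g (x, t) := mul_div_cancel₀ _ (hg'_pos _).ne'

variable [FiniteDimensional ℝ P]

theorem exists_isSmoothTransport_of_hasDerivAt_update (i : ι) {g g' u : (ι → ℝ) × P → ℝ}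
    {R : ℝ} (hg : ContDiff ℝ ∞ g) (hu : ContDiff ℝ ∞ u)
    (hg_pos : ∀ z, 0 < g z) (hg'_pos : ∀ z, 0 < g' z)
    (hu_deriv : ∀ x t, HasDerivAt (fun r => u (update x i r, t)) (g (x, t) - g' (x, t)) (x i))
    (hu_supp : ∀ x t, R ≤ |x i| → u (x, t) = 0) :
    ∃ e, IsSmoothTransport g g' e ∧ ∀ t, (∀ x, u (x, t) = 0) → ∀ x, e (x, t) = x := by
  set line : ℝ × ((ι → ℝ) × P) → (ι → ℝ) × P := fun w => (update w.2.1 i w.1, w.2.2)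
  have hline : ContDiff ℝ ∞ line :=
    (contDiff_snd.fst.update contDiff_fst i).prodMk contDiff_snd.snd
  set A := fiberPrimitive (g ∘ line)
  set B := fun w => A w - u (line w)
  have hA : ContDiff ℝ ∞ A := contDiff_fiberPrimitive (hg.comp hline)
  have hB : ContDiff ℝ ∞ B := hA.sub (hu.comp hline)
  have ha (y : ℝ) (p : (ι → ℝ) × P) : HasDerivAt (fun y => A (y, p)) (g (line (y, p))) y :=
    hasDerivAt_fiberPrimitive (hg.comp hline).continuous y p
  have hb (y : ℝ) (p : (ι → ℝ) × P) : HasDerivAt (fun y => B (y, p)) (g' (line (y, p))) y := by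
    have := hu_deriv (update p.1 i y) p.2
    simp only [update_idem, update_self] at this
    simpa [B, line] using (ha y p).fun_sub this
  have hAB (y : ℝ) (p : (ι → ℝ) × P) (hy : R ≤ |y|) : A (y, p) = B (y, p) := by
    simp [B, line, hu_supp (update p.1 i y) p.2 (by simpa using hy)]
  obtain ⟨ψ, hψ, hBψ, hψ_uniq, hψ_deriv⟩ := exists_contDiff_fiberwise_solution hA hB ha hb
    (fun _ => hg_pos _) (fun _ => hg'_pos _) hAB
  obtain ⟨χ, hχ, hAχ, hχ_uniq, -⟩ := exists_contDiff_fiberwise_solution hB hA hb ha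
    (fun _ => hg'_pos _) (fun _ => hg_pos _) fun y p hy => (hAB y p hy).symm
  refine ⟨coordinateMove i ψ, isSmoothTransport_coordinateMove i hψ hχ
    (fun a p => (hψ_uniq _ a (hAχ (a, p)).symm).symm)
    (fun a p => (hχ_uniq _ a (hBψ (a, p)).symm).symm) hg'_pos fun x t => ?_, fun t hu0 x => ?_⟩
  · simpa [line, coordinateMove] using hψ_deriv (x i, (update x i 0, t))
  · have : ψ (x i, (update x i 0, t)) = x i := (hψ_uniq _ _ (by simp [B, line, hu0])).symm
    simp [coordinateMove, this]

end CoordinateStep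

theorem Function.Periodic.sum_range_mul_add {M : Type*} [AddCommMonoid M] {f : ℕ → M} {q : ℕ}
    (hf : Periodic f q) (k r : ℕ) :
    ∑ l ∈ range (q * k + r), f l = k • ∑ l ∈ range q, f l + ∑ l ∈ range r, f l := by
  induction k with
  | zero => simp
  | succ k ih =>
    have hf' (l : ℕ) : f (q + l) = f l := by rw [add_comm, hf]
    rw [show q * (k + 1) + r = q + (q * k + r) by ring, sum_range_add]
    simp only [hf']
    rw [ih, succ_nsmul]
    abel

theorem HasCompactSupport.exists_le_mul_of_pos {V : Type*} [TopologicalSpace V] {f μ : V → ℝ}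
    (hf_supp : HasCompactSupport f) (hf : Continuous f) (hμ : Continuous μ)
    (hμ_pos : ∀ x, 0 < μ x) : ∃ M, ∀ x, f x ≤ M * μ x := by
  obtain ⟨M, hM⟩ := (hf_supp.mul_right (f' := fun x => (μ x)⁻¹)).exists_bound_of_continuous
    (hf.mul (hμ.inv₀ fun x => (hμ_pos x).ne'))
  refine ⟨M, fun x => ?_⟩
  have := (le_abs_self _).trans ((Real.norm_eq_abs _).symm.trans_le (hM x))
  rwa [Pi.mul_apply, ← div_eq_mul_inv, div_le_iff₀ (hμ_pos x)] at this

theorem exists_nat_forall_sub_mul_sum_range_pos {V : Type*} [TopologicalSpace V]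
    {h₀ h₁ : V → ℝ} {d : ℕ → V → ℝ} {q : ℕ} (hh₀ : Continuous h₀) (hh₁ : Continuous h₁)
    (hh₀_pos : ∀ x, 0 < h₀ x) (hh₁_pos : ∀ x, 0 < h₁ x) (hd : ∀ l, Continuous (d l))
    (hd_supp : ∀ l, HasCompactSupport (d l)) (hd_per : Periodic d q)
    (hd_sum : ∀ x, ∑ l ∈ range q, d l x = h₀ x - h₁ x) :
    ∃ N : ℕ, 0 < N ∧ ∀ m ≤ N * q, ∀ s ∈ Set.Icc (0 : ℝ) (N : ℝ)⁻¹, ∀ x,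
      0 < h₀ x - s * ∑ l ∈ range m, d l x := by
  set μ : V → ℝ := fun x => min (h₀ x) (h₁ x)
  have hμ_pos (x : V) : 0 < μ x := lt_min (hh₀_pos x) (hh₁_pos x)
  set S : V → ℝ := fun x => ∑ l ∈ range q, |d l x|
  have hS_supp : HasCompactSupport S := by
    rw [show S = ∑ l ∈ range q, fun x => |d l x| by ext; simp [S]]
    exact .finset_sum fun l _ => (hd_supp l).abs
  obtain ⟨M, hSμ⟩ := hS_supp.exists_le_mul_of_pos (continuous_finsetSum _ fun l _ => (hd l).abs)
    (hh₀.min hh₁) hμ_pos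
  refine ⟨⌊M⌋₊ + 1, Nat.succ_pos _, fun m hm s ⟨hs₀, hs₁⟩ x => ?_⟩
  set N : ℕ := ⌊M⌋₊ + 1
  have hMN : M < N := by simpa [N] using Nat.lt_floor_add_one M
  have hN : (0 : ℝ) < N := by positivity
  rcases Nat.eq_zero_or_pos q with rfl | hq
  · simp [show m = 0 by omega, hh₀_pos x]
  obtain ⟨k, r, hkN, hrq, rfl⟩ : ∃ k r, k ≤ N ∧ r ≤ q ∧ m = q * k + r :=
    ⟨m / q, m % q, Nat.div_le_of_le_mul (by linarith), (Nat.mod_lt m hq).le,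
      (Nat.div_add_mod m q).symm⟩
  have hper : Periodic (fun l => d l x) q := fun l => congrFun (hd_per l) x
  -- The density is the convex combination `(1 - s k) h₀ + s k h₁ ≥ μ` minus an error
  -- `s T` with `|s T| ≤ S / N < μ`.
  rw [hper.sum_range_mul_add, hd_sum, nsmul_eq_mul]
  set T := ∑ l ∈ range r, d l x
  have hT : |T| ≤ S x := (abs_sum_le_sum_abs _ _).trans
    (sum_le_sum_of_subset_of_nonneg (range_subset_range.mpr hrq) fun _ _ _ => abs_nonneg _)
  have hsk : s * k ≤ 1 := calc
    s * k ≤ (N : ℝ)⁻¹ * N := by gcongr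
    _ = 1 := inv_mul_cancel₀ hN.ne'
  have hconv : μ x ≤ h₀ x - s * k * (h₀ x - h₁ x) := by
    have : 0 ≤ s * k := by positivity
    nlinarith [min_le_left (h₀ x) (h₁ x), min_le_right (h₀ x) (h₁ x)]
  have herr : s * |T| < μ x := calc
    s * |T| ≤ (N : ℝ)⁻¹ * (M * μ x) := by gcongr; exact hT.trans (hSμ x)
    _ < (N : ℝ)⁻¹ * (N * μ x) := by gcongr; exact hμ_pos x
    _ = μ x := by field_simp
  nlinarith [mul_le_mul_of_nonneg_left (le_abs_self T) hs₀]

theorem HasCompactSupport.exists_eq_zero_of_le_abs {ι F : Type*} [Fintype ι] [Zero F]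
    {f : (ι → ℝ) → F} (hf : HasCompactSupport f) : ∃ R, ∀ x i, R ≤ |x i| → f x = 0 := by
  obtain ⟨R, hR⟩ := hf.isBounded.subset_ball 0
  exact ⟨R, fun x i hx => image_eq_zero_of_notMem_tsupport fun hx' =>
    (hx.trans (norm_le_pi_norm x i)).not_gt (mem_ball_zero_iff.mp (hR hx'))⟩

section Moser

variable {q : ℕ} [NeZero q]

noncomputable def cyclicDivTerm (X : (Fin q → ℝ) → Fin q → ℝ) (l : ℕ) (x : Fin q → ℝ) : ℝ :=
  fderiv ℝ (fun y => X y (Fin.ofNat q l)) x (Pi.single (Fin.ofNat q l) 1)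

theorem contDiff_cyclicDivTerm {X : (Fin q → ℝ) → Fin q → ℝ} (hX : ContDiff ℝ ∞ X) (l : ℕ) :
    ContDiff ℝ ∞ (cyclicDivTerm X l) :=
  (((contDiff_apply ℝ ℝ _).comp hX).fderiv_right (m := ∞) le_rfl).clm_apply contDiff_const

theorem hasCompactSupport_cyclicDivTerm {X : (Fin q → ℝ) → Fin q → ℝ}
    (hX : HasCompactSupport X) (l : ℕ) : HasCompactSupport (cyclicDivTerm X l) :=
  (hX.comp_left (g := fun v : Fin q → ℝ => v (Fin.ofNat q l)) (by simp)).fderiv_apply ℝ _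

theorem periodic_cyclicDivTerm (X : (Fin q → ℝ) → Fin q → ℝ) : Periodic (cyclicDivTerm X) q :=
  fun l => funext fun x => by
    simp only [cyclicDivTerm, show Fin.ofNat q (l + q) = Fin.ofNat q l from Fin.ext (by simp)]

theorem sum_range_cyclicDivTerm (X : (Fin q → ℝ) → Fin q → ℝ) (x : Fin q → ℝ) :
    ∑ l ∈ range q, cyclicDivTerm X l x = ∑ i, fderiv ℝ (fun y => X y i) x (Pi.single i 1) := by
  rw [← Fin.sum_univ_eq_sum_range]
  simp [cyclicDivTerm]

noncomputable def moserDensity (h₀ : (Fin q → ℝ) → ℝ) (X : (Fin q → ℝ) → Fin q → ℝ) (N m : ℕ)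
    (z : (Fin q → ℝ) × ℝ) : ℝ :=
  h₀ z.1 - Real.smoothTransition z.2 / N * ∑ l ∈ range m, cyclicDivTerm X l z.1

theorem exists_isSmoothTransport_moserDensity_succ {h₀ : (Fin q → ℝ) → ℝ}
    {X : (Fin q → ℝ) → Fin q → ℝ} {N m : ℕ} (hh₀ : ContDiff ℝ ∞ h₀) (hX : ContDiff ℝ ∞ X)
    (hX_supp : HasCompactSupport X) (hpos : ∀ z, 0 < moserDensity h₀ X N m z)
    (hpos' : ∀ z, 0 < moserDensity h₀ X N (m + 1) z) :
    ∃ e, IsSmoothTransport (moserDensity h₀ X N m) (moserDensity h₀ X N (m + 1)) e ∧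
      ∀ x, e (x, 0) = x := by
  set i := Fin.ofNat q m
  set s : ℝ → ℝ := fun t => Real.smoothTransition t / N
  have hs : ContDiff ℝ ∞ s := Real.smoothTransition.contDiff.div_const _
  have hXi : ContDiff ℝ ∞ fun y => X y i := (contDiff_apply ℝ ℝ i).comp hX
  obtain ⟨R, hR⟩ := hX_supp.exists_eq_zero_of_le_abs
  have hu_deriv (x : Fin q → ℝ) (t : ℝ) : HasDerivAt (fun r => s t * X (update x i r) i)
      (moserDensity h₀ X N m (x, t) - moserDensity h₀ X N (m + 1) (x, t)) (x i) := by
    have hdiff : moserDensity h₀ X N m (x, t) - moserDensity h₀ X N (m + 1) (x, t)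
        = s t * fderiv ℝ (fun y => X y i) x (Pi.single i 1) := by
      simp only [moserDensity, cyclicDivTerm, sum_range_succ, s, i]
      ring
    rw [hdiff]
    exact ((hXi.differentiable (by simp) x).hasDerivAt_update i).const_mul (s t)
  obtain ⟨e, he, he0⟩ := exists_isSmoothTransport_of_hasDerivAt_update i (R := R)
    ((hh₀.comp contDiff_fst).sub ((hs.comp contDiff_snd).mul
      (ContDiff.sum fun l _ => (contDiff_cyclicDivTerm hX l).comp contDiff_fst)))
    ((hs.comp contDiff_snd).mul (hXi.comp contDiff_fst)) hpos hpos' hu_deriv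
    fun x t hx => by simp [hR x i hx]
  exact ⟨e, he, he0 0 fun x => by simp [s, Real.smoothTransition.zero_of_nonpos le_rfl]⟩

theorem exists_isSmoothTransport_of_sub_eq_divergence {h₀ h₁ : (Fin q → ℝ) → ℝ}
    {X : (Fin q → ℝ) → Fin q → ℝ} (hh₀ : ContDiff ℝ ∞ h₀) (hh₁ : ContDiff ℝ ∞ h₁)
    (hh₀_pos : ∀ x, 0 < h₀ x) (hh₁_pos : ∀ x, 0 < h₁ x) (hX : ContDiff ℝ ∞ X)
    (hX_supp : HasCompactSupport X)
    (hdiv : ∀ x, h₀ x - h₁ x = ∑ i, fderiv ℝ (fun y => X y i) x (Pi.single i 1)) :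
    ∃ e, IsSmoothTransport (fun z => h₀ z.1)
        (fun z => h₀ z.1 - Real.smoothTransition z.2 * (h₀ z.1 - h₁ z.1)) e ∧
      ∀ x, e (x, 0) = x := by
  have hsum (x : Fin q → ℝ) : ∑ l ∈ range q, cyclicDivTerm X l x = h₀ x - h₁ x := by
    rw [hdiv, sum_range_cyclicDivTerm]
  obtain ⟨N, hN, hpos⟩ := exists_nat_forall_sub_mul_sum_range_pos hh₀.continuous hh₁.continuous
    hh₀_pos hh₁_pos (fun l => (contDiff_cyclicDivTerm hX l).continuous)
    (hasCompactSupport_cyclicDivTerm hX_supp) (periodic_cyclicDivTerm X) hsum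
  have hpos' (m : ℕ) (hm : m ≤ N * q) (z : (Fin q → ℝ) × ℝ) : 0 < moserDensity h₀ X N m z :=
    hpos m hm _ ⟨div_nonneg (Real.smoothTransition.nonneg _) N.cast_nonneg,
      div_le_div_of_nonneg_right (Real.smoothTransition.le_one _) N.cast_nonneg |>.trans_eq
        (one_div _)⟩ z.1
  choose! e he he0 using fun m (hm : m < N * q) => exists_isSmoothTransport_moserDensity_succ
    hh₀ hX hX_supp (hpos' m hm.le) (hpos' (m + 1) hm)
  refine ⟨transportChain e (N * q), ?_, transportChain_apply_of_forall he0⟩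
  convert isSmoothTransport_transportChain he using 1
  · ext z
    simp [moserDensity]
  · ext z
    have hfull : ∑ l ∈ range (N * q), cyclicDivTerm X l z.1 = N * (h₀ z.1 - h₁ z.1) := by
      simpa [mul_comm, hsum] using Periodic.sum_range_mul_add (f := fun l => cyclicDivTerm X l z.1)
        (fun l => congrFun (periodic_cyclicDivTerm X l) z.1) N 0
    simp only [moserDensity, hfull]
    field_simp

end Moser

/-- Global ℝ^q version of Theorem 2.6 (H-Moser), by Moser's homotopy method: if the positive
densities `h₀, h₁` differ by the divergence of a compactly supported smooth vector field `X`,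
then there is a smooth isotopy of diffeomorphisms `Φ_t` with `Φ₀ = id` such that `Φ₁` pulls
back the volume form `h₁·dx` to `h₀·dx`, i.e. `h₁(Φ₁ x)·det(DΦ₁(x)) = h₀(x)`. -/
theorem moser_isotopy
    (q : ℕ) (hq : 1 ≤ q)
    (h₀ h₁ : (Fin q → ℝ) → ℝ)
    (h₀smooth : ContDiff ℝ (⊤ : ℕ∞) h₀) (h₁smooth : ContDiff ℝ (⊤ : ℕ∞) h₁)
    (h₀pos : ∀ x, 0 < h₀ x) (h₁pos : ∀ x, 0 < h₁ x)
    (X : (Fin q → ℝ) → (Fin q → ℝ))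
    (hX : ContDiff ℝ (⊤ : ℕ∞) X) (hXc : HasCompactSupport X)
    (hdiv : ∀ x : Fin q → ℝ,
      h₀ x - h₁ x = ∑ i, fderiv ℝ (fun y => X y i) x (Pi.single i 1)) :
    ∃ Φ : ℝ → (Fin q → ℝ) → (Fin q → ℝ),
      ContDiff ℝ (⊤ : ℕ∞) (fun p : ℝ × (Fin q → ℝ) => Φ p.1 p.2) ∧
      Φ 0 = id ∧
      (∀ t ∈ Set.Icc (0:ℝ) 1, Function.Bijective (Φ t) ∧
        ContDiff ℝ (⊤ : ℕ∞) (Function.invFun (Φ t))) ∧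
      ∀ x : Fin q → ℝ,
        h₁ (Φ 1 x) * LinearMap.det ((fderiv ℝ (Φ 1) x).toLinearMap) = h₀ x := by
  have : NeZero q := ⟨by omega⟩
  obtain ⟨e, he, he0⟩ := exists_isSmoothTransport_of_sub_eq_divergence h₀smooth h₁smooth h₀pos
    h₁pos hX hXc hdiv
  refine ⟨fun t x => e (x, t), he.contDiff.comp (contDiff_snd.prodMk contDiff_fst), funext he0,
    fun t _ => ⟨he.bijective_slice t, he.contDiff_invFun_slice t⟩, fun x => ?_⟩
  simpa [Real.smoothTransition.one_of_one_le le_rfl] using he.pullback x 1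
end

section
/- Let K be a field of characteristic zero and let f = (f₁,…,f_p) be a p-tuple of polynomials in K[x₁,…,x_n] which is quasihomogeneous for weights w ∈ ℤ^n and weighted degrees δ ∈ ℤ^p, i.e. Σ_{i=1}^n w_i·x_i·∂f_j/∂x_i = δ_j·f_j for all j, where δ_j ≥ 0 for all j and Σ_{j=1}^p δ_j > 0. Let T ⊆ K[x₁,…,x_n]^p be the set of all p-tuples of the form ( Σ_{i=1}^n a_i·∂f_j/∂x_i + b_j(f₁,…,f_p) )_{j=1,…,p}, where a₁,…,a_n ∈ K[x₁,…,x_n] have zero constant term and b = (b₁,…,b_p) ∈ K[y₁,…,y_p]^p has all components with zero constant term and satisfies Σ_{j=1}^p ∂b_j/∂y_j = 0 (a divergence-free polynomial vector field vanishing at 0). Then for every p-tuple c = (c₁,…,c_p) ∈ K[y₁,…,y_p]^p of polynomials with zero constant term, the tuple ( c_j(f₁,…,f_p) )_{j=1,…,p} belongs to T. -/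
/-!
Let `E = ∑ δ_j y_j ∂/∂y_j` be the weighted Euler field on the target. By quasihomogeneity, for any
`q ∈ K[y]` the vector field `q(f) · (w_i x_i)_i` on the source satisfies `tf(q(f) · w x) = wf(q · E)`.
Hence `wf(c) = tf(q(f) · w x) + wf(c - q · E)`, and it suffices to choose `q` with
`div (q · E) = div c`. On monomials, `q ↦ div (q · E)` is diagonal with eigenvalue
`∑ δ_j (m_j + 1)` at `y^m`, which is positive since `δ ≥ 0` and `∑ δ_j > 0`; so it is surjective.
-/

open MvPolynomial Finset

lemma sum_intCast_mul_succ_ne_zero {σ K : Type*} [Fintype σ] [Ring K] [CharZero K]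
    (δ : σ → ℤ) (hδ : ∀ j, 0 ≤ δ j) (hδpos : 0 < ∑ j, δ j) (m : σ → ℕ) :
    ∑ j, (δ j : K) * (m j + 1) ≠ 0 := by
  have hle : ∑ j, δ j ≤ ∑ j, δ j * (m j + 1) :=
    sum_le_sum fun j _ => le_mul_of_one_le_right (hδ j) (by omega)
  have hcast : ∑ j, (δ j : K) * (m j + 1) = ((∑ j, δ j * (m j + 1) : ℤ) : K) := by push_cast; rfl
  rw [hcast, Int.cast_ne_zero]
  omega

namespace MvPolynomial

variable {σ : Type*} [Fintype σ]

lemma sum_pderiv_C_mul_X_mul_monomial {R : Type*} [CommSemiring R] (δ : σ → R) (m : σ →₀ ℕ)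
    (r : R) :
    ∑ j, pderiv j (C (δ j) * (X j * monomial m r)) =
      monomial m ((∑ j, δ j * (m j + 1)) * r) := by
  calc ∑ j, pderiv j (C (δ j) * (X j * monomial m r))
      = ∑ j, monomial m (δ j * (m j + 1) * r) := by
        refine sum_congr rfl fun j _ => ?_
        rw [pderiv_C_mul, pderiv_mul, pderiv_X_self, one_mul, X_mul_pderiv_monomial,
          smul_monomial, ← map_add, C_mul_monomial, nsmul_eq_mul]
        ring_nf
    _ = monomial m ((∑ j, δ j * (m j + 1)) * r) := by rw [← map_sum, sum_mul]

lemma exists_sum_pderiv_C_mul_X_mul_eq {K : Type*} [Field K] (δ : σ → K)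
    (hδ : ∀ m : σ →₀ ℕ, ∑ j, δ j * (m j + 1) ≠ 0) (r : MvPolynomial σ K) :
    ∃ q, ∑ j, pderiv j (C (δ j) * (X j * q)) = r := by
  refine ⟨∑ m ∈ r.support, monomial m ((∑ j, δ j * (m j + 1))⁻¹ * coeff m r), ?_⟩
  simp only [mul_sum, map_sum]
  rw [sum_comm]
  simp only [sum_pderiv_C_mul_X_mul_monomial, mul_inv_cancel_left₀ (hδ _)]
  exact support_sum_monomial_coeff r

end MvPolynomial

open MvPolynomial Finset in
/-- Proposition 3.4 (inf-wqh), case `G = 𝒜_{Ω_p}`, polynomial setting: if `f` is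
quasihomogeneous with all weighted degrees `δ_j ≥ 0` and `∑ δ_j > 0`, then every element
`wf(c) = (c_j(f))_j` of `L𝓛·f` (with `c` vanishing at `0`) lies in `L𝒜_{Ω_p}·f`, i.e. is of
the form `tf(a) + wf(b)` with `a` vanishing at `0` and `b` divergence-free vanishing at `0`. -/
theorem wqh_AOmegap_tangent_space
    (K : Type*) [Field K] [CharZero K] (n p : ℕ)
    (f : Fin p → MvPolynomial (Fin n) K)
    (w : Fin n → ℤ) (δ : Fin p → ℤ)
    (hqh : ∀ j, ∑ i, w i • (X i * pderiv i (f j)) = δ j • f j)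
    (hδ : ∀ j, 0 ≤ δ j) (hδpos : 0 < ∑ j, δ j) :
    ∀ c : Fin p → MvPolynomial (Fin p) K, (∀ j, constantCoeff (c j) = 0) →
      ∃ (a : Fin n → MvPolynomial (Fin n) K) (b : Fin p → MvPolynomial (Fin p) K),
        (∀ i, constantCoeff (a i) = 0) ∧
        (∀ j, constantCoeff (b j) = 0) ∧
        (∑ j, pderiv j (b j) = 0) ∧
        ∀ j, aeval f (c j) =
          (∑ i, a i * pderiv i (f j)) + aeval f (b j) := by
  intro c hc
  obtain ⟨q, hq⟩ := exists_sum_pderiv_C_mul_X_mul_eq (fun j => (δ j : K))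
    (fun m => sum_intCast_mul_succ_ne_zero δ hδ hδpos m) (∑ j, pderiv j (c j))
  refine ⟨fun i => w i • (X i * aeval f q), fun j => c j - C (δ j : K) * (X j * q),
    by simp, by simp [hc], by simp only [map_sub, sum_sub_distrib, hq, sub_self], fun j => ?_⟩
  have htf : ∑ i, w i • (X i * aeval f q) * pderiv i (f j) = aeval f q * δ j • f j := by
    rw [← hqh j, mul_sum]
    exact sum_congr rfl fun i _ => by rw [smul_mul_assoc, mul_smul_comm]; ring
  rw [htf, map_sub, map_mul, map_mul, aeval_X, aeval_C, zsmul_eq_mul]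
  simp only [algebraMap_eq, map_intCast]
  ring
end

section
/- Let K be a field of characteristic zero and let f = (f₁,…,f_p) be a p-tuple of polynomials in K[x₁,…,x_n] which is quasihomogeneous for weights w ∈ ℕ^n (all w_i ≥ 0) with Σ_{i=1}^n w_i > 0 and weighted degrees δ ∈ ℤ^p, i.e. Σ_{i=1}^n w_i·x_i·∂f_j/∂x_i = δ_j·f_j for all j. Let T ⊆ K[x₁,…,x_n]^p be the set of all p-tuples of the form ( Σ_{i=1}^n a_i·∂f_j/∂x_i + Σ_{l=1}^p B_{jl}·f_l )_{j=1,…,p}, where a₁,…,a_n ∈ K[x₁,…,x_n] have zero constant term and satisfy Σ_{i=1}^n ∂a_i/∂x_i = 0 (a divergence-free polynomial vector field vanishing at 0), and B is an arbitrary p×p matrix over K[x₁,…,x_n]. Then for every n-tuple a' = (a'₁,…,a'_n) of polynomials with zero constant term (with no divergence condition), the tuple ( Σ_{i=1}^n a'_i·∂f_j/∂x_i )_{j=1,…,p} belongs to T. -/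
/-!
Write `E = ∑ wᵢ xᵢ ∂ᵢ` for the weighted Euler operator and `W = ∑ wᵢ > 0`. Since `E` acts on a
monomial `xᵐ` by the scalar `∑ wᵢ mᵢ ≥ 0`, the operator `E + W` is invertible in characteristic
zero; choose `h` with `(E + W) h = div a'`. The radial field `(wᵢ xᵢ h)ᵢ` has divergence
`(E + W) h`, so `a = a' - (wᵢ xᵢ h)ᵢ` is divergence-free and still vanishes at `0`, while by the
Euler relations `tf((wᵢ xᵢ h)ᵢ) = diag(δⱼ h) · f`.
-/

open MvPolynomial Finset

namespace MvPolynomial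

section CommSemiring

variable {σ R : Type*} [CommSemiring R] [Fintype σ]

theorem sum_weight_X_mul_pderiv_monomial (w : σ → ℕ) (m : σ →₀ ℕ) (r : R) :
    ∑ i, w i • (X i * pderiv i (monomial m r)) = Finsupp.weight w m • monomial m r :=
  (isWeightedHomogeneous_monomial w m r rfl).sum_weight_X_mul_pderiv

theorem sum_pderiv_weight_smul_X_mul (w : σ → ℕ) (h : MvPolynomial σ R) :
    ∑ i, pderiv i (w i • (X i * h)) = ∑ i, w i • (X i * pderiv i h) + (∑ i, w i) • h := by
  simp only [map_nsmul, pderiv_mul, pderiv_X_self, one_mul, smul_add, sum_add_distrib,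
    ← sum_smul]
  rw [add_comm]

end CommSemiring

theorem exists_sum_weight_X_mul_pderiv_add_nsmul_eq {σ K : Type*} [Fintype σ] [Field K]
    [CharZero K] (w : σ → ℕ) {c : ℕ} (hc : 0 < c) (g : MvPolynomial σ K) :
    ∃ h, ∑ i, w i • (X i * pderiv i h) + c • h = g := by
  induction g using MvPolynomial.induction_on' with
  | monomial m r =>
    have hne : ((Finsupp.weight w m + c : ℕ) : K) ≠ 0 :=
      Nat.cast_ne_zero.mpr (by omega)
    refine ⟨monomial m (r / (Finsupp.weight w m + c : ℕ)), ?_⟩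
    rw [sum_weight_X_mul_pderiv_monomial, ← add_smul, smul_monomial, nsmul_eq_mul,
      mul_div_cancel₀ _ hne]
  | add p q hp hq =>
    obtain ⟨u, rfl⟩ := hp
    obtain ⟨v, rfl⟩ := hq
    refine ⟨u + v, ?_⟩
    simp only [map_add, mul_add, smul_add, sum_add_distrib]
    abel

end MvPolynomial

open MvPolynomial Finset in
/-- Proposition 3.4 (inf-wqh), case `G = 𝒦_{Ω_n}`, polynomial setting: if `f` is
quasihomogeneous with all weights `w_i ≥ 0` and `∑ w_i > 0`, then every element `tf(a')` of
`Lℛ·f` (with `a'` vanishing at `0`) lies in `L𝒦_{Ω_n}·f`, i.e. is of the form `tf(a) + B·f`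
with `a` divergence-free vanishing at `0` and `B` an arbitrary matrix over `K[x]`. -/
theorem wqh_KOmegan_tangent_space
    (K : Type*) [Field K] [CharZero K] (n p : ℕ)
    (f : Fin p → MvPolynomial (Fin n) K)
    (w : Fin n → ℕ) (δ : Fin p → ℤ)
    (hqh : ∀ j, ∑ i, (w i : ℤ) • (X i * pderiv i (f j)) = δ j • f j)
    (hwpos : 0 < ∑ i, w i) :
    ∀ a' : Fin n → MvPolynomial (Fin n) K, (∀ i, constantCoeff (a' i) = 0) →
      ∃ (a : Fin n → MvPolynomial (Fin n) K)
        (B : Fin p → Fin p → MvPolynomial (Fin n) K),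
        (∀ i, constantCoeff (a i) = 0) ∧
        (∑ i, pderiv i (a i) = 0) ∧
        ∀ j, ∑ i, a' i * pderiv i (f j) =
          (∑ i, a i * pderiv i (f j)) + ∑ l, B j l * f l := by
  intro a' ha'
  obtain ⟨h, hdiv⟩ := exists_sum_weight_X_mul_pderiv_add_nsmul_eq w hwpos (∑ i, pderiv i (a' i))
  refine ⟨fun i => a' i - w i • (X i * h), Matrix.diagonal fun j => δ j • h, ?_, ?_, ?_⟩
  · intro i
    simp [ha' i]
  · simp only [map_sub, sum_sub_distrib, sum_pderiv_weight_smul_X_mul, hdiv, sub_self]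
  · intro j
    have euler : ∑ i, w i • (X i * pderiv i (f j)) = δ j • f j := by
      simpa only [natCast_zsmul] using hqh j
    have radial : ∑ i, w i • (X i * h) * pderiv i (f j) = (δ j • h) * f j :=
      calc ∑ i, w i • (X i * h) * pderiv i (f j)
          = h * ∑ i, w i • (X i * pderiv i (f j)) := by
            rw [mul_sum]; exact sum_congr rfl fun i _ => by ring
        _ = (δ j • h) * f j := by rw [euler, mul_smul_comm, smul_mul_assoc]
    change _ = _ + Matrix.mulVec (Matrix.diagonal _) f j
    rw [Matrix.mulVec_diagonal, ← radial, ← sum_add_distrib]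
    simp only [sub_mul, sub_add_cancel]
end

section
/- Let K be a field of characteristic zero and let f = (f₁,…,f_p) be a p-tuple of polynomials in K[x₁,…,x_n] which is quasihomogeneous for weights w ∈ ℤ^n and weighted degrees δ ∈ ℤ^p with Σ_{j=1}^p δ_j ≠ 0, i.e. Σ_{i=1}^n w_i·x_i·∂f_j/∂x_i = δ_j·f_j for all j. Let T ⊆ K[x₁,…,x_n]^p be the set of all p-tuples of the form ( Σ_{i=1}^n a_i·∂f_j/∂x_i + Σ_{l=1}^p B_{jl}·f_l )_{j=1,…,p}, where a₁,…,a_n ∈ K[x₁,…,x_n] have zero constant term and B is a p×p matrix over K[x₁,…,x_n] with trace zero (Σ_{j=1}^p B_{jj} = 0). Then B'·f := ( Σ_{l=1}^p B'_{jl}·f_l )_{j=1,…,p} belongs to T for every p×p matrix B' over K[x₁,…,x_n]. -/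
/-!
The Euler relations say that the Euler vector field `a = (w_i x_i)_i` satisfies
`tf(a) = diag(δ)·f`, and multiplying `a` by any polynomial `h` keeps `a(0) = 0`.
Given `B'` with trace `t`, put `h = t / ∑ δ_j`: then `B'·f = tf(h a) + (B' - h diag(δ))·f`,
and `B' - h diag(δ)` has trace `t - h ∑ δ_j = 0`.
-/

open MvPolynomial Finset

theorem MvPolynomial.sum_zsmul_mul_X_mul_pderiv_of_euler {R σ : Type*} [CommRing R] [Fintype σ]
    (w : σ → ℤ) (d : ℤ) {g : MvPolynomial σ R}
    (hg : ∑ i, w i • (X i * pderiv i g) = d • g) (h : MvPolynomial σ R) :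
    ∑ i, w i • (h * X i) * pderiv i g = d • (h * g) := by
  rw [← mul_smul_comm, ← hg, mul_sum]
  refine sum_congr rfl fun i _ => ?_
  rw [mul_smul_comm, smul_mul_assoc, mul_assoc]

theorem Matrix.sum_mul_eq_mul_add_sum_sub_diagonal_mul {ι S : Type*} [Fintype ι] [DecidableEq ι]
    [CommRing S] (B : ι → ι → S) (d v : ι → S) (j : ι) :
    ∑ l, B j l * v l = d j * v j + ∑ l, (of B - diagonal d) j l * v l := by
  simp only [sub_apply, of_apply, sub_mul, sum_sub_distrib, diagonal_apply, ite_mul, zero_mul,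
    sum_ite_eq, mem_univ, if_true, add_sub_cancel]

/-- Proposition 3.4 (inf-wqh), case `G = 𝒦_{Ω_p}`, polynomial setting: if `f` is
quasihomogeneous with `∑ δ_j ≠ 0`, then every element `B'·f` of `L𝒞·f` lies in
`L𝒦_{Ω_p}·f`, i.e. is of the form `tf(a) + B·f` with `a` vanishing at `0` and `B` a
trace-zero matrix over `K[x]`. -/
theorem wqh_KOmegap_tangent_space
    (K : Type*) [Field K] [CharZero K] (n p : ℕ)
    (f : Fin p → MvPolynomial (Fin n) K)
    (w : Fin n → ℤ) (δ : Fin p → ℤ)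
    (hqh : ∀ j, ∑ i, w i • (X i * pderiv i (f j)) = δ j • f j)
    (hδ : ∑ j, δ j ≠ 0) :
    ∀ B' : Fin p → Fin p → MvPolynomial (Fin n) K,
      ∃ (a : Fin n → MvPolynomial (Fin n) K)
        (B : Fin p → Fin p → MvPolynomial (Fin n) K),
        (∀ i, constantCoeff (a i) = 0) ∧
        (∑ j, B j j = 0) ∧
        ∀ j, ∑ l, B' j l * f l =
          (∑ i, a i * pderiv i (f j)) + ∑ l, B j l * f l := by
  intro B'
  have hc : ((∑ j, δ j : ℤ) : K) ≠ 0 := by exact_mod_cast hδ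
  set h : MvPolynomial (Fin n) K := ((∑ j, δ j : ℤ) : K)⁻¹ • Matrix.trace (Matrix.of B')
  have htrace : (∑ j, δ j) • h = Matrix.trace (Matrix.of B') := by
    rw [← Int.cast_smul_eq_zsmul K, smul_smul, mul_inv_cancel₀ hc, one_smul]
  refine ⟨fun i => w i • (h * X i), Matrix.of B' - Matrix.diagonal fun j => δ j • h,
    fun i => by simp, ?_, fun j => ?_⟩
  · change Matrix.trace (Matrix.of B' - Matrix.diagonal _) = 0
    rw [Matrix.trace_sub, Matrix.trace_diagonal, ← sum_smul, htrace, sub_self]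
  · rw [sum_zsmul_mul_X_mul_pderiv_of_euler w (δ j) (hqh j),
      Matrix.sum_mul_eq_mul_add_sum_sub_diagonal_mul B' (fun j => δ j • h) f j, smul_mul_assoc]
end

section
/- Let K be a field of characteristic zero, let w ∈ ℕ^n be non-negative integer weights with Σ_{i=1}^n w_i ≥ 1, and let I ⊆ K[x₁,…,x_n] be an ideal generated by polynomials g₁,…,g_p each of which is quasihomogeneous for the weights w, i.e. Σ_{i=1}^n w_i·x_i·∂g_j/∂x_i = δ_j·g_j for some δ_j ∈ ℤ. Then for every polynomial F ∈ K[x₁,…,x_n] there exists a polynomial vector field X = (X₁,…,X_n) ∈ K[x₁,…,x_n]^n such that Σ_{i=1}^n X_i·∂h/∂x_i ∈ I for every h ∈ I (i.e. X ∈ Derlog(I)) and Σ_{i=1}^n ∂X_i/∂x_i = F. In other words, the divergence map div : Derlog(I) → K[x₁,…,x_n] is surjective. -/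
/-!
The weighted Euler field `E = ∑ wᵢ xᵢ ∂ᵢ` sends each generator `gⱼ` to `δⱼ gⱼ`, so, being a
derivation, it preserves `I`; hence so does `f • E` for every polynomial `f`. Its divergence is
`div (f • E) = E f + |w| f`, and on a monomial `xˢ` the operator `f ↦ E f + |w| f` is multiplication
by `|w| + w·s`, which is nonzero because `|w| ≥ 1` and the characteristic is zero. Dividing
the coefficients of `F` by these scalars gives `f` with `div (f • E) = F`.
-/

namespace Derivation

variable {R A : Type*} [CommSemiring R] [CommSemiring A] [Algebra R A]

theorem map_mem_span (D : Derivation R A A) {S : Set A} (hS : ∀ s ∈ S, D s ∈ Ideal.span S)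
    {a : A} (ha : a ∈ Ideal.span S) : D a ∈ Ideal.span S := by
  induction ha using Submodule.span_induction with
  | mem s hs => exact hS s hs
  | zero => simp
  | add x y _ _ hx hy => simpa using add_mem hx hy
  | smul b x hx hDx =>
    rw [smul_eq_mul, leibniz, smul_eq_mul, smul_eq_mul]
    exact add_mem (Ideal.mul_mem_left _ b hDx) (Ideal.mul_mem_right _ _ hx)

end Derivation

namespace MvPolynomial

theorem surjective_of_map_monomial_eq_smul {σ K : Type*} [Field K]
    (L : MvPolynomial σ K →ₗ[K] MvPolynomial σ K)
    (c : (σ →₀ ℕ) → K) (hc : ∀ s, c s ≠ 0) (hL : ∀ s a, L (monomial s a) = c s • monomial s a) :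
    Function.Surjective L := by
  intro F
  refine ⟨∑ s ∈ F.support, monomial s (coeff s F / c s), ?_⟩
  simp only [map_sum, hL, smul_monomial, smul_eq_mul, mul_div_cancel₀ _ (hc _)]
  exact F.support_sum_monomial_coeff

variable {σ R : Type*} [Fintype σ] [CommSemiring R]

noncomputable def vectorFieldDerivation (V : σ → MvPolynomial σ R) :
    Derivation R (MvPolynomial σ R) (MvPolynomial σ R) :=
  ∑ i, V i • pderiv i

theorem vectorFieldDerivation_apply (V : σ → MvPolynomial σ R) (h : MvPolynomial σ R) :
    vectorFieldDerivation V h = ∑ i, V i * pderiv i h := by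
  rw [vectorFieldDerivation, ← Derivation.coeFnAddMonoidHom_apply, map_sum, Finset.sum_apply]
  rfl

theorem vectorFieldDerivation_smul (f : MvPolynomial σ R) (V : σ → MvPolynomial σ R) :
    vectorFieldDerivation (f • V) = f • vectorFieldDerivation V := by
  simp [vectorFieldDerivation, Finset.smul_sum, smul_smul]

noncomputable def divergence (V : σ → MvPolynomial σ R) : MvPolynomial σ R :=
  ∑ i, pderiv i (V i)

theorem divergence_smul (f : MvPolynomial σ R) (V : σ → MvPolynomial σ R) :
    divergence (f • V) = vectorFieldDerivation V f + f * divergence V := by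
  simp only [divergence, vectorFieldDerivation_apply, Pi.smul_apply, smul_eq_mul, pderiv_mul,
    Finset.mul_sum, ← Finset.sum_add_distrib]
  exact Finset.sum_congr rfl fun i _ => by ring

noncomputable def eulerDerivation (w : σ → ℕ) :
    Derivation R (MvPolynomial σ R) (MvPolynomial σ R) :=
  vectorFieldDerivation fun i => w i • X i

theorem eulerDerivation_apply (w : σ → ℕ) (h : MvPolynomial σ R) :
    eulerDerivation w h = ∑ i, w i • (X i * pderiv i h) := by
  simp only [eulerDerivation, vectorFieldDerivation_apply, smul_mul_assoc]

theorem eulerDerivation_monomial (w : σ → ℕ) (s : σ →₀ ℕ) (a : R) :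
    eulerDerivation w (monomial s a) = Finsupp.weight w s • monomial s a := by
  simp_rw [eulerDerivation_apply, X_mul_pderiv_monomial, smul_smul, ← Finset.sum_smul]
  rw [Finsupp.weight_apply, Finsupp.sum_fintype s (fun i c => c • w i) fun _ => zero_smul ℕ _]
  simp only [smul_eq_mul, mul_comm]

theorem divergence_euler (w : σ → ℕ) :
    divergence (fun i => w i • X i : σ → MvPolynomial σ R) = (∑ i, w i : ℕ) := by
  simp [divergence]

theorem exists_eulerDerivation_add_mul_eq {K : Type*} [Field K] [CharZero K] (w : σ → ℕ)
    (hw : 1 ≤ ∑ i, w i) (F : MvPolynomial σ K) :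
    ∃ f, eulerDerivation w f + f * ((∑ i, w i : ℕ) : MvPolynomial σ K) = F := by
  let L := (eulerDerivation w).toLinearMap +
    LinearMap.mulRight K ((∑ i, w i : ℕ) : MvPolynomial σ K)
  refine surjective_of_map_monomial_eq_smul L (fun s => (Finsupp.weight w s + ∑ i, w i : ℕ))
    (fun s => Nat.cast_ne_zero.mpr (by omega)) (fun s a => ?_) F
  simp only [L, LinearMap.add_apply, Derivation.coeFn_coe, LinearMap.mulRight_apply,
    eulerDerivation_monomial, Nat.cast_add, add_smul, smul_eq_C_mul, nsmul_eq_mul, map_natCast]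
  ring

end MvPolynomial

open MvPolynomial Finset in
/-- Infinitesimal content of Theorem 4.3 (I-orb-wqh), polynomial setting: if the ideal `I` is
generated by polynomials `g₁,…,g_p` that are quasihomogeneous for a common system of
non-negative weights with positive total weight, then the divergence map
`div : Derlog(I) → K[x₁,…,x_n]` is surjective. -/
theorem wqh_ideal_divergence_surjective
    (K : Type*) [Field K] [CharZero K] (n p : ℕ)
    (w : Fin n → ℕ) (hw : 1 ≤ ∑ i, w i)
    (g : Fin p → MvPolynomial (Fin n) K) (δ : Fin p → ℤ)
    (hqh : ∀ j, ∑ i, (w i : ℤ) • (X i * pderiv i (g j)) = δ j • g j)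
    (I : Ideal (MvPolynomial (Fin n) K)) (hI : I = Ideal.span (Set.range g)) :
    ∀ F : MvPolynomial (Fin n) K,
      ∃ Xf : Fin n → MvPolynomial (Fin n) K,
        (∀ h ∈ I, (∑ i, Xf i * pderiv i h) ∈ I) ∧
        ∑ i, pderiv i (Xf i) = F := by
  intro F
  set E : Derivation K (MvPolynomial (Fin n) K) (MvPolynomial (Fin n) K) := eulerDerivation w
  have hE_gen : ∀ j, E (g j) = δ j • g j := fun j => by
    simpa only [E, eulerDerivation_apply, natCast_zsmul] using hqh j
  have hE_ideal : ∀ h ∈ I, E h ∈ I := by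
    subst hI
    refine fun h hh => E.map_mem_span ?_ hh
    rintro _ ⟨j, rfl⟩
    rw [hE_gen]
    exact zsmul_mem (Ideal.subset_span (Set.mem_range_self j)) _
  obtain ⟨f, hf⟩ := exists_eulerDerivation_add_mul_eq w hw F
  refine ⟨f • fun i => w i • X i, fun h hh => ?_, ?_⟩
  · rw [← vectorFieldDerivation_apply, vectorFieldDerivation_smul]
    exact I.mul_mem_left f (hE_ideal h hh)
  · change divergence _ = F
    rw [divergence_smul, divergence_euler]
    exact hf
end

section
/- Let K be a field of characteristic zero. In the polynomial ring K[x,y], let D be the K-span of all polynomials ∂a₁/∂x + ∂a₂/∂y, where a₁, a₂ ∈ K[x,y], a₁ has zero constant term, a₁ is even in y (a₁(x,−y) = a₁(x,y)) and a₂ is odd in y (a₂(x,−y) = −a₂(x,y)). Then the images of the monomials x^l·y^{2k+1} (for all integers l, k ≥ 0) in the quotient space K[x,y]/D are linearly independent over K; in particular K[x,y]/D is infinite-dimensional. -/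
/-!
The reflection `y ↦ -y` commutes with `∂/∂x` and anticommutes with `∂/∂y`, so the divergence of
a field with `a₁` even and `a₂` odd in `y` is even in `y`. Hence the odd-part projection
`p ↦ (p(x,y) - p(x,-y))/2` vanishes on `D` and descends to `K[x,y]/D`, where it sends the class
of `x^l y^(2k+1)` back to that monomial; these monomials are independent in `K[x,y]`.
-/

namespace MvPolynomial

section Reflection

variable (R : Type*) [CommRing R]

noncomputable def reflectY : MvPolynomial (Fin 2) R →ₐ[R] MvPolynomial (Fin 2) R :=
  aeval ![X 0, -X 1]

variable {R}

theorem reflectY_pderiv_zero (p : MvPolynomial (Fin 2) R) :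
    reflectY R (pderiv 0 p) = pderiv 0 (reflectY R p) := by
  induction p using MvPolynomial.induction_on with
  | C a => simp
  | add p q hp hq => simp only [map_add, hp, hq]
  | mul_X p i hp =>
    simp only [pderiv_mul, map_add, map_mul, hp]
    fin_cases i <;> simp [reflectY]

theorem reflectY_pderiv_one (p : MvPolynomial (Fin 2) R) :
    reflectY R (pderiv 1 p) = -pderiv 1 (reflectY R p) := by
  induction p using MvPolynomial.induction_on with
  | C a => simp
  | add p q hp hq => simp only [map_add, hp, hq, neg_add]
  | mul_X p i hp =>
    simp only [pderiv_mul, map_add, map_mul, hp]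
    fin_cases i <;> simp [reflectY]; ring

theorem reflectY_divergence {a₁ a₂ : MvPolynomial (Fin 2) R}
    (h₁ : reflectY R a₁ = a₁) (h₂ : reflectY R a₂ = -a₂) :
    reflectY R (pderiv 0 a₁ + pderiv 1 a₂) = pderiv 0 a₁ + pderiv 1 a₂ := by
  rw [map_add, reflectY_pderiv_zero, reflectY_pderiv_one, h₁, h₂, map_neg, neg_neg]

theorem reflectY_X_pow_mul_X_pow_odd (l k : ℕ) :
    reflectY R (X 0 ^ l * X 1 ^ (2 * k + 1)) = -(X 0 ^ l * X 1 ^ (2 * k + 1)) := by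
  simp [reflectY, Odd.neg_pow (odd_two_mul_add_one k)]

end Reflection

section OddPart

variable (K : Type*) [Field K]

noncomputable def oddPartY : MvPolynomial (Fin 2) K →ₗ[K] MvPolynomial (Fin 2) K :=
  (2 : K)⁻¹ • (LinearMap.id - (reflectY K).toLinearMap)

variable {K}

theorem oddPartY_apply (p : MvPolynomial (Fin 2) K) :
    oddPartY K p = (2 : K)⁻¹ • (p - reflectY K p) :=
  rfl

theorem oddPartY_eq_zero_of_even {p : MvPolynomial (Fin 2) K} (hp : reflectY K p = p) :
    oddPartY K p = 0 := by
  rw [oddPartY_apply, hp, sub_self, smul_zero]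

theorem oddPartY_eq_self_of_odd [NeZero (2 : K)] {p : MvPolynomial (Fin 2) K}
    (hp : reflectY K p = -p) : oddPartY K p = p := by
  rw [oddPartY_apply, hp, sub_neg_eq_add, ← two_smul K p, smul_smul,
    inv_mul_cancel₀ two_ne_zero, one_smul]

end OddPart

theorem linearIndependent_X_pow_mul_X_pow {R ι : Type*} [CommSemiring R] {e : ι → ℕ × ℕ}
    (he : Function.Injective e) :
    LinearIndependent R (fun i => (X 0 : MvPolynomial (Fin 2) R) ^ (e i).1 * X 1 ^ (e i).2) := by
  have hexp : Function.Injective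
      (fun i => Finsupp.single (0 : Fin 2) (e i).1 + Finsupp.single 1 (e i).2) := by
    intro i j hij
    have h0 := DFunLike.congr_fun hij 0
    have h1 := DFunLike.congr_fun hij 1
    simp only [Finsupp.add_apply, Finsupp.single_apply] at h0 h1
    exact he (Prod.ext (by simpa using h0) (by simpa using h1))
  convert (basisMonomials (Fin 2) R).linearIndependent.comp _ hexp using 1
  funext i
  simp [coe_basisMonomials, X_pow_eq_monomial, monomial_mul]

end MvPolynomial

theorem LinearIndependent.quotient_mk_of_le_ker {R M N ι : Type*} [Ring R] [AddCommGroup M]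
    [Module R M] [AddCommGroup N] [Module R N] {D : Submodule R M} {f : M →ₗ[R] N}
    (hD : D ≤ LinearMap.ker f) {v : ι → M} (hv : LinearIndependent R (f ∘ v)) :
    LinearIndependent R (fun i => (Submodule.Quotient.mk (v i) : M ⧸ D)) :=
  LinearIndependent.of_comp (D.liftQ f hD) hv

open MvPolynomial in
/-- Section 7, the fold map: let `D ⊆ K[x,y]` be the span of all divergences
`∂a₁/∂x + ∂a₂/∂y` of lowerable vector fields for the fold, i.e. with `a₁` even in `y` with
zero constant term and `a₂` odd in `y`. Then the classes of the monomials `x^l·y^(2k+1)` in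
`K[x,y]/D` are linearly independent; in particular `K[x,y]/D` is infinite-dimensional. -/
theorem fold_divergence_infinite_codim
    (K : Type*) [Field K] [CharZero K]
    (D : Submodule K (MvPolynomial (Fin 2) K))
    (hD : D = Submodule.span K
      {F : MvPolynomial (Fin 2) K |
        ∃ a₁ a₂ : MvPolynomial (Fin 2) K,
          constantCoeff a₁ = 0 ∧
          aeval ![X 0, -X 1] a₁ = a₁ ∧
          aeval ![X 0, -X 1] a₂ = -a₂ ∧
          F = pderiv (0 : Fin 2) a₁ + pderiv (1 : Fin 2) a₂}) :
    LinearIndependent K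
      (fun lk : ℕ × ℕ =>
        (Submodule.Quotient.mk ((X 0) ^ lk.1 * (X 1) ^ (2 * lk.2 + 1)) :
          MvPolynomial (Fin 2) K ⧸ D)) ∧
    ¬ Module.Finite K (MvPolynomial (Fin 2) K ⧸ D) := by
  have hD_le : D ≤ LinearMap.ker (oddPartY K) := by
    rw [hD, Submodule.span_le]
    rintro F ⟨a₁, a₂, -, h₁, h₂, rfl⟩
    exact oddPartY_eq_zero_of_even (reflectY_divergence h₁ h₂)
  have hodd : ∀ lk : ℕ × ℕ, oddPartY K (X 0 ^ lk.1 * X 1 ^ (2 * lk.2 + 1)) =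
      X 0 ^ lk.1 * X 1 ^ (2 * lk.2 + 1) :=
    fun lk => oddPartY_eq_self_of_odd (reflectY_X_pow_mul_X_pow_odd lk.1 lk.2)
  have hv : LinearIndependent K
      (fun lk : ℕ × ℕ => oddPartY K (X 0 ^ lk.1 * X 1 ^ (2 * lk.2 + 1))) := by
    simp only [hodd]
    exact linearIndependent_X_pow_mul_X_pow (e := fun lk : ℕ × ℕ => (lk.1, 2 * lk.2 + 1))
      fun a b h => by
        simp only [Prod.mk.injEq] at h
        exact Prod.ext h.1 (by omega)
  have hli := hv.quotient_mk_of_le_ker (v := fun lk : ℕ × ℕ => X 0 ^ lk.1 * X 1 ^ (2 * lk.2 + 1))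
    hD_le
  exact ⟨hli, fun _ => hli.finite.false⟩
end
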